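/- arXiv:2301.09079 — 5 statements merged into one kernel-verified Lean document; each statement's English description precedes it below -/
import Mathlib

section
/- Let d, N ≥ 1, let ε ∈ (0,1), and let X_1,…,X_N be random points in [0,1]^d on a common probability space. Suppose p ∈ (0,1) satisfies (1+p)^d ≤ 2 − ε, and suppose that for every nonempty u ⊆ {1,…,d} one has P( D*_N(X_1(u),…,X_N(u)) > B(|u|,ε,N) ) ≤ p^{|u|}. Then with probability at least ε, simultaneously for every nonempty u ⊆ {1,…,d}, D*_N(X_1(u),…,X_N(u)) ≤ B(|u|,ε,N); in particular, for any nonnegative weights (γ_{u,d})_{∅≠u⊆{1,…,d}}, the weighted star discrepancy max_{∅≠u⊆{1,…,d}} γ_{u,d}·D*_N(X_1(u),…,X_N(u)) is at most max_{∅≠u⊆{1,…,d}} γ_{u,d}·B(|u|,ε,N) with probability at least ε. -/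
/-! The union bound over the `2 ^ d - 1` nonempty projections: the failure probabilities add up
to at most `∑_{u ≠ ∅} p ^ |u| = (1 + p) ^ d - 1 ≤ 1 - ε`. -/

open MeasureTheory ProbabilityTheory Real Set
open scoped ENNReal

noncomputable def starDisc {d : ℕ} {ι : Type*} [Fintype ι] (p : ι → (Fin d → ℝ)) : ℝ :=
  ⨆ x : (Set.Icc (0 : Fin d → ℝ) 1),
    |(volume (Set.Icc (0 : Fin d → ℝ) x.1)).toReal -
      (∑ n, (Set.Icc (0 : Fin d → ℝ) x.1).indicator (fun _ => (1:ℝ)) (p n)) / (Fintype.card ι : ℝ)|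

noncomputable def cConst (d : ℕ) (q : ℝ) : ℝ :=
  Real.log ((2 * Real.exp 1) ^ d / (Real.sqrt (2 * Real.pi * d) * (1 - q)))

noncomputable def BBound (d N : ℕ) (q : ℝ) : ℝ :=
  6 * (d : ℝ) ^ ((3:ℝ)/4) / (N : ℝ) ^ ((1:ℝ)/2 + 1/(2*(d:ℝ))) *
    Real.sqrt ((d : ℝ) * Real.log ((N : ℝ) + 1) + cConst d q) + 2 * cConst d q / (3 * (N:ℝ))

/-- Projection of a point of `[0,1]^d` to the coordinates indexed by a subset `u`. -/
noncomputable def projPt {d : ℕ} (u : Finset (Fin d)) (p : Fin d → ℝ) : Fin u.card → ℝ :=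
  fun j => p ((u.orderIsoOfFin rfl j : {x // x ∈ u}) : Fin d)

theorem Fintype.sum_pow_card_finset {R : Type*} [CommSemiring R] (ι : Type*) [Fintype ι] (a : R) :
    ∑ u : Finset ι, a ^ u.card = (a + 1) ^ Fintype.card ι := by
  simpa only [one_pow, mul_one] using Fintype.sum_pow_mul_eq_add_pow ι a 1

theorem Fintype.sum_pow_card_finset_erase_empty {R : Type*} [CommRing R] (ι : Type*) [Fintype ι]
    [DecidableEq ι] (a : R) :
    ∑ u ∈ Finset.univ.erase (∅ : Finset ι), a ^ u.card = (a + 1) ^ Fintype.card ι - 1 := by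
  rw [Finset.sum_erase_eq_sub (Finset.mem_univ _), Fintype.sum_pow_card_finset,
    Finset.card_empty, pow_zero]

namespace MeasureTheory

variable {Ω ι : Type*} [MeasurableSpace Ω] [Fintype ι]

theorem measure_exists_nonempty_le_one_add_pow_sub_one (μ : Measure Ω) (A : Finset ι → Set Ω)
    {p : ℝ} (hp : 0 ≤ p)
    (hA : ∀ u : Finset ι, u.Nonempty → μ (A u) ≤ ENNReal.ofReal (p ^ u.card)) :
    μ {ω | ∃ u : Finset ι, u.Nonempty ∧ ω ∈ A u} ≤
      ENNReal.ofReal ((1 + p) ^ Fintype.card ι - 1) := by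
  classical
  have hunion : {ω | ∃ u : Finset ι, u.Nonempty ∧ ω ∈ A u} =
      ⋃ u ∈ Finset.univ.erase (∅ : Finset ι), A u := by
    ext ω
    simp [Finset.nonempty_iff_ne_empty]
  calc μ {ω | ∃ u : Finset ι, u.Nonempty ∧ ω ∈ A u}
      ≤ ∑ u ∈ Finset.univ.erase (∅ : Finset ι), μ (A u) :=
        hunion ▸ measure_biUnion_finset_le _ _
    _ ≤ ∑ u ∈ Finset.univ.erase (∅ : Finset ι), ENNReal.ofReal (p ^ u.card) :=
        Finset.sum_le_sum fun u hu =>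
          hA u (Finset.nonempty_iff_ne_empty.2 (Finset.ne_of_mem_erase hu))
    _ = ENNReal.ofReal ((1 + p) ^ Fintype.card ι - 1) := by
        rw [← ENNReal.ofReal_sum_of_nonneg fun u _ => pow_nonneg hp _,
          Fintype.sum_pow_card_finset_erase_empty, add_comm]

theorem ofReal_le_measure_of_measure_compl_le (μ : Measure Ω) [IsProbabilityMeasure μ]
    {s : Set Ω} {ε : ℝ} (hε : ε ≤ 1) (hs : μ sᶜ ≤ ENNReal.ofReal (1 - ε)) :
    ENNReal.ofReal ε ≤ μ s := by
  have hprob : 1 ≤ μ s + μ sᶜ := measure_univ (μ := μ) ▸ measure_univ_le_add_compl s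
  calc ENNReal.ofReal ε = 1 - ENNReal.ofReal (1 - ε) := by
        rw [← ENNReal.ofReal_one, ← ENNReal.ofReal_sub _ (sub_nonneg.2 hε), sub_sub_cancel]
    _ ≤ 1 - μ sᶜ := tsub_le_tsub_left hs 1
    _ ≤ μ s := tsub_le_iff_right.2 hprob

end MeasureTheory

theorem weighted_star_discrepancy_bound_general {d N : ℕ}
    {Ω : Type*} [MeasureSpace Ω] [IsProbabilityMeasure (ℙ : Measure Ω)]
    (X : Fin N → Ω → (Fin d → ℝ))
    (ε p : ℝ) (hε : ε ∈ Set.Ioo (0:ℝ) 1) (hp : p ∈ Set.Ioo (0:ℝ) 1)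
    (hpd : (1 + p) ^ d ≤ 2 - ε)
    (hproj : ∀ u : Finset (Fin d), u.Nonempty →
      ℙ {ω | BBound u.card N ε < starDisc (fun n => projPt u (X n ω))}
        ≤ ENNReal.ofReal (p ^ u.card))
    (γ : Finset (Fin d) → ℝ) (hγ : ∀ u, 0 ≤ γ u) :
    ENNReal.ofReal ε ≤ ℙ {ω | ∀ u : Finset (Fin d), u.Nonempty →
        starDisc (fun n => projPt u (X n ω)) ≤ BBound u.card N ε} ∧
    ENNReal.ofReal ε ≤ ℙ {ω |
        (⨆ u : {u : Finset (Fin d) // u.Nonempty},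
          γ u.1 * starDisc (fun n => projPt u.1 (X n ω)))
        ≤ ⨆ u : {u : Finset (Fin d) // u.Nonempty}, γ u.1 * BBound u.1.card N ε} := by
  have hbad := measure_exists_nonempty_le_one_add_pow_sub_one ℙ
    (fun u => {ω | BBound u.card N ε < starDisc (fun n => projPt u (X n ω))}) hp.1.le hproj
  rw [Fintype.card_fin] at hbad
  have hgood : ENNReal.ofReal ε ≤ ℙ {ω | ∀ u : Finset (Fin d), u.Nonempty →
      starDisc (fun n => projPt u (X n ω)) ≤ BBound u.card N ε} := by
    refine ofReal_le_measure_of_measure_compl_le ℙ hε.2.le ?_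
    calc ℙ {ω | ∀ u : Finset (Fin d), u.Nonempty →
          starDisc (fun n => projPt u (X n ω)) ≤ BBound u.card N ε}ᶜ
        ≤ ℙ {ω | ∃ u : Finset (Fin d), u.Nonempty ∧
          BBound u.card N ε < starDisc (fun n => projPt u (X n ω))} :=
          measure_mono fun ω hω => by
            simpa only [mem_compl_iff, mem_ofPred_eq, not_forall, not_le, exists_prop] using hω
      _ ≤ ENNReal.ofReal ((1 + p) ^ d - 1) := hbad
      _ ≤ ENNReal.ofReal (1 - ε) := ENNReal.ofReal_le_ofReal (by linarith)
  refine ⟨hgood, hgood.trans (measure_mono fun ω hω => ?_)⟩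
  exact ciSup_mono (Set.finite_range _).bddAbove
    fun u : {u : Finset (Fin d) // u.Nonempty} => mul_le_mul_of_nonneg_left (hω u.1 u.2) (hγ u.1)

theorem weighted_star_discrepancy_bound {d N : ℕ} (hd : 1 ≤ d) (hN : 1 ≤ N)
    {Ω : Type*} [MeasureSpace Ω] [IsProbabilityMeasure (ℙ : Measure Ω)]
    (X : Fin N → Ω → (Fin d → ℝ))
    (ε p : ℝ) (hε : ε ∈ Set.Ioo (0:ℝ) 1) (hp : p ∈ Set.Ioo (0:ℝ) 1)
    (hpd : (1 + p) ^ d ≤ 2 - ε)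
    (hproj : ∀ u : Finset (Fin d), u.Nonempty →
      ℙ {ω | BBound u.card N ε < starDisc (fun n => projPt u (X n ω))}
        ≤ ENNReal.ofReal (p ^ u.card))
    (γ : Finset (Fin d) → ℝ) (hγ : ∀ u, 0 ≤ γ u) :
    ENNReal.ofReal ε ≤ ℙ {ω | ∀ u : Finset (Fin d), u.Nonempty →
        starDisc (fun n => projPt u (X n ω)) ≤ BBound u.card N ε} ∧
    ENNReal.ofReal ε ≤ ℙ {ω |
        (⨆ u : {u : Finset (Fin d) // u.Nonempty},
          γ u.1 * starDisc (fun n => projPt u.1 (X n ω)))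
        ≤ ⨆ u : {u : Finset (Fin d) // u.Nonempty}, γ u.1 * BBound u.1.card N ε} :=
  weighted_star_discrepancy_bound_general X ε p hε hp hpd hproj γ hγ
end

section
/- Let x_1,…,x_N ∈ [0,1]^d and define the kernel K(x,y) = ∏_{i=1}^d (1 − max(x_i, y_i)) for x, y ∈ [0,1]^d. Let γ ∈ (0,1] and let f, g : [0,1]^d → ℝ be measurable functions with g ∈ L²([0,1]^d), such that f(x)² = ∫_{[0,1]^d} K(x,y) g(y)² dy for every x ∈ [0,1]^d and γ·‖g‖²_{L²} ≤ ‖f‖²_{L²}. Then (1 − D*_N(x_1,…,x_N)/γ)·‖f‖²_{L²} ≤ (1/N)·∑_{j=1}^N f(x_j)² ≤ (1 + D*_N(x_1,…,x_N)/γ)·‖f‖²_{L²}. -/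
open MeasureTheory Real Set
open scoped ENNReal

/-- The kernel `K(x,y) = ∏_i (1 - max(x_i, y_i))`. -/
noncomputable def kerK {d : ℕ} (x y : Fin d → ℝ) : ℝ := ∏ i, (1 - max (x i) (y i))

/-!
Write `s ≺ t` for `∀ i, s i < t i` and `H(t) = ∫_{y ≺ t} g(y)² dy`, all integrals over the unit
cube. Since `K(z, y) = λ{t : z ≺ t ∧ y ≺ t}`, Fubini turns the representation of `f²` into
`f(z)² = ∫ 𝟙[z ≺ t] H(t) dt`, hence
`(1/N) ∑ f(x_j)² - ‖f‖² = ∫ ((1/N) #{j : x_j ≺ t} - λ{z : z ≺ t}) H(t) dt`.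
For almost every `t` no `x_j` lies on the boundary of `[0, t]`, so the bracket is the local
discrepancy of the points at the box `[0, t]`, at most `D*_N` in absolute value. With
`0 ≤ H ≤ ‖g‖²` this gives `|(1/N) ∑ f(x_j)² - ‖f‖²| ≤ D*_N ‖g‖² ≤ (D*_N / γ) ‖f‖²`.
-/

local infixl:50 " ≺ " => StrongLT

section Fubini

variable {α β : Type*} [MeasurableSpace α] [MeasurableSpace β]
  {μ : Measure α} {ν : Measure β} [SFinite μ] [IsFiniteMeasure ν]

theorem integral_mul_integral_comm {u : α → ℝ} {F : α → β → ℝ} {C : ℝ}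
    (hu : Integrable u μ) (hF : AEStronglyMeasurable (Function.uncurry F) (μ.prod ν))
    (hFC : ∀ a b, ‖F a b‖ ≤ C) :
    ∫ a, u a * ∫ b, F a b ∂ν ∂μ = ∫ b, ∫ a, u a * F a b ∂μ ∂ν := by
  simp_rw [← integral_const_mul]
  refine integral_integral_swap <|
    (hu.norm.mul_prod (integrable_const C)).mono' (hu.1.comp_fst.mul hF) (.of_forall fun p => ?_)
  simpa only [Function.uncurry, norm_mul] using
    mul_le_mul_of_nonneg_left (hFC p.1 p.2) (norm_nonneg (u p.1))

end Fubini

variable {d : ℕ}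

instance : IsProbabilityMeasure (volume.restrict (Icc (0 : Fin d → ℝ) 1)) :=
  ⟨by simp [Real.volume_Icc_pi]⟩

theorem measurableSet_strongLT :
    MeasurableSet {p : (Fin d → ℝ) × (Fin d → ℝ) | p.1 ≺ p.2} := by
  simp only [StrongLT, ofPred_forall]
  exact .iInter fun i => measurableSet_lt (by fun_prop) (by fun_prop)

theorem measurableSet_setOf_strongLT_left (a : Fin d → ℝ) : MeasurableSet {t | a ≺ t} :=
  measurableSet_strongLT.preimage measurable_prodMk_left

theorem measurableSet_setOf_strongLT_right (b : Fin d → ℝ) : MeasurableSet {s | s ≺ b} :=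
  measurableSet_strongLT.preimage measurable_prodMk_right

theorem measureReal_unitCube_pi (s : Fin d → Set ℝ) :
    (volume.restrict (Icc (0 : Fin d → ℝ) 1)).real (univ.pi s)
      = ∏ i, volume.real (s i ∩ Icc 0 1) := by
  rw [measureReal_restrict_apply' measurableSet_Icc, ← pi_univ_Icc, ← pi_inter_distrib,
    measureReal_def, volume_pi_pi, ENNReal.toReal_prod]
  rfl

theorem measureReal_setOf_strongLT_left {a : Fin d → ℝ} (ha : a ∈ Icc 0 1) :
    (volume.restrict (Icc (0 : Fin d → ℝ) 1)).real {t | a ≺ t} = ∏ i, (1 - a i) := by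
  have hset : {t | a ≺ t} = univ.pi fun i => Ioi (a i) := by ext; simp [StrongLT]
  rw [hset, measureReal_unitCube_pi]
  refine Finset.prod_congr rfl fun i _ => ?_
  have hIoc : Ioi (a i) ∩ Icc 0 1 = Ioc (a i) 1 := by
    ext s
    simp only [mem_inter_iff, mem_Ioi, mem_Icc, mem_Ioc]
    exact ⟨fun h => ⟨h.1, h.2.2⟩, fun h => ⟨h.1, (ha.1 i).trans h.1.le, h.2⟩⟩
  rw [hIoc]
  exact Real.volume_real_Ioc_of_le (ha.2 i)

theorem measureReal_setOf_strongLT_right {b : Fin d → ℝ} (hb : b ∈ Icc 0 1) :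
    (volume.restrict (Icc (0 : Fin d → ℝ) 1)).real {s | s ≺ b}
      = (volume (Icc 0 b)).toReal := by
  have hset : {s | s ≺ b} = univ.pi fun i => Iio (b i) := by ext; simp [StrongLT]
  rw [hset, measureReal_unitCube_pi, Real.volume_Icc_pi_toReal hb.1]
  refine Finset.prod_congr rfl fun i _ => ?_
  have hIco : Iio (b i) ∩ Icc 0 1 = Ico 0 (b i) := by
    ext s
    simp only [mem_inter_iff, mem_Iio, mem_Icc, mem_Ico]
    exact ⟨fun h => ⟨h.2.1, h.1⟩, fun h => ⟨h.2, h.1, h.2.le.trans (hb.2 i)⟩⟩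
  rw [hIco]
  exact Real.volume_real_Ico_of_le (hb.1 i)

noncomputable def strongLTIndicator (s t : Fin d → ℝ) : ℝ :=
  {p : (Fin d → ℝ) × (Fin d → ℝ) | p.1 ≺ p.2}.indicator 1 (s, t)

theorem strongLTIndicator_eq_indicator_right (s t : Fin d → ℝ) :
    strongLTIndicator s t = {u | u ≺ t}.indicator 1 s := rfl

theorem measurable_uncurry_strongLTIndicator :
    Measurable (Function.uncurry (strongLTIndicator (d := d))) :=
  measurable_const.indicator measurableSet_strongLT

theorem strongLTIndicator_nonneg (s t : Fin d → ℝ) : 0 ≤ strongLTIndicator s t :=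
  indicator_nonneg (fun _ _ => zero_le_one) _

theorem strongLTIndicator_le_one (s t : Fin d → ℝ) : strongLTIndicator s t ≤ 1 :=
  indicator_le_self' (fun _ _ => zero_le_one) _

theorem norm_strongLTIndicator_le (s t : Fin d → ℝ) : ‖strongLTIndicator s t‖ ≤ 1 := by
  rw [Real.norm_of_nonneg (strongLTIndicator_nonneg s t)]
  exact strongLTIndicator_le_one s t

theorem kerK_eq_integral_strongLTIndicator {z y : Fin d → ℝ} (hz : z ∈ Icc 0 1)
    (hy : y ∈ Icc 0 1) :
    kerK z y = ∫ t in Icc 0 1, strongLTIndicator z t * strongLTIndicator y t := by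
  have hsup : {t | z ≺ t} ∩ {t | y ≺ t} = {t | z ⊔ y ≺ t} := by
    ext t; simp [StrongLT, forall_and]
  have hmul (t : Fin d → ℝ) :
      strongLTIndicator z t * strongLTIndicator y t = {t | z ⊔ y ≺ t}.indicator 1 t := by
    rw [← hsup, inter_indicator_one]; rfl
  simp_rw [hmul]
  rw [integral_indicator_one (measurableSet_setOf_strongLT_left _),
    measureReal_setOf_strongLT_left (mem_Icc.2 ⟨le_sup_of_le_left hz.1, sup_le hz.2 hy.2⟩)]
  rfl

noncomputable def lowerOrthantIntegral (h : (Fin d → ℝ) → ℝ) (t : Fin d → ℝ) : ℝ :=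
  ∫ y in Icc 0 1, strongLTIndicator y t * h y

theorem aestronglyMeasurable_lowerOrthantIntegral {h : (Fin d → ℝ) → ℝ}
    (hh : Integrable h (volume.restrict (Icc 0 1))) :
    AEStronglyMeasurable (lowerOrthantIntegral h) (volume.restrict (Icc 0 1)) :=
  AEStronglyMeasurable.integral_prod_right' <|
    (measurable_uncurry_strongLTIndicator.comp measurable_swap).aestronglyMeasurable.mul
      hh.1.comp_snd

theorem lowerOrthantIntegral_nonneg {h : (Fin d → ℝ) → ℝ} (h0 : 0 ≤ h)
    (t : Fin d → ℝ) :
    0 ≤ lowerOrthantIntegral h t :=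
  integral_nonneg fun y => mul_nonneg (strongLTIndicator_nonneg y t) (h0 y)

theorem lowerOrthantIntegral_le {h : (Fin d → ℝ) → ℝ}
    (hh : Integrable h (volume.restrict (Icc 0 1))) (h0 : 0 ≤ h) (t : Fin d → ℝ) :
    lowerOrthantIntegral h t ≤ ∫ y in Icc 0 1, h y :=
  integral_mono (hh.bdd_mul (c := 1)
      (measurable_uncurry_strongLTIndicator.comp measurable_prodMk_right).aestronglyMeasurable
      (.of_forall fun y => norm_strongLTIndicator_le y t))
    hh fun y => mul_le_of_le_one_left (h0 y) (strongLTIndicator_le_one y t)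

theorem integrable_lowerOrthantIntegral {h : (Fin d → ℝ) → ℝ}
    (hh : Integrable h (volume.restrict (Icc 0 1))) (h0 : 0 ≤ h) :
    Integrable (lowerOrthantIntegral h) (volume.restrict (Icc 0 1)) :=
  .of_bound (aestronglyMeasurable_lowerOrthantIntegral hh) _ <| .of_forall fun t => by
    rw [Real.norm_of_nonneg (lowerOrthantIntegral_nonneg h0 t)]
    exact lowerOrthantIntegral_le hh h0 t

theorem integral_kerK_mul_eq {h : (Fin d → ℝ) → ℝ}
    (hh : Integrable h (volume.restrict (Icc 0 1))) {z : Fin d → ℝ} (hz : z ∈ Icc 0 1) :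
    ∫ y in Icc 0 1, kerK z y * h y
      = ∫ t in Icc 0 1, strongLTIndicator z t * lowerOrthantIntegral h t := by
  calc ∫ y in Icc 0 1, kerK z y * h y
      = ∫ y in Icc 0 1, h y * ∫ t in Icc 0 1, strongLTIndicator z t * strongLTIndicator y t :=
        setIntegral_congr_fun measurableSet_Icc fun y hy => by
          rw [kerK_eq_integral_strongLTIndicator hz hy, mul_comm]
    _ = ∫ t in Icc 0 1, ∫ y in Icc 0 1,
          h y * (strongLTIndicator z t * strongLTIndicator y t) :=
        integral_mul_integral_comm (C := 1) hh
          ((((measurable_uncurry_strongLTIndicator.comp measurable_prodMk_left).comp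
            measurable_snd).mul measurable_uncurry_strongLTIndicator).aestronglyMeasurable)
          fun y t => by
            rw [norm_mul, ← one_mul 1]
            exact mul_le_mul (norm_strongLTIndicator_le z t) (norm_strongLTIndicator_le y t)
              (norm_nonneg _) zero_le_one
    _ = ∫ t in Icc 0 1, strongLTIndicator z t * lowerOrthantIntegral h t := by
        simp_rw [lowerOrthantIntegral, ← integral_const_mul]
        congr with t
        congr with y
        ring

theorem integral_integral_strongLTIndicator_mul {v : (Fin d → ℝ) → ℝ} {C : ℝ}
    (hv : AEStronglyMeasurable v (volume.restrict (Icc 0 1))) (hvC : ∀ t, ‖v t‖ ≤ C) :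
    ∫ z in Icc 0 1, ∫ t in Icc 0 1, strongLTIndicator z t * v t
      = ∫ t in Icc 0 1, (∫ z in Icc 0 1, strongLTIndicator z t) * v t := by
  have := integral_mul_integral_comm (u := fun _ => 1) (C := C)
    (integrable_const (μ := volume.restrict (Icc (0 : Fin d → ℝ) 1)) (1 : ℝ))
    (measurable_uncurry_strongLTIndicator.aestronglyMeasurable.mul hv.comp_snd) fun z t => by
      rw [norm_mul, ← one_mul C]
      exact mul_le_mul (norm_strongLTIndicator_le z t) (hvC t) (norm_nonneg _) zero_le_one
  simpa only [one_mul, integral_mul_const] using this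

theorem integrable_mul_lowerOrthantIntegral {h c : (Fin d → ℝ) → ℝ} {C : ℝ}
    (hh : Integrable h (volume.restrict (Icc 0 1))) (h0 : 0 ≤ h)
    (hc : AEStronglyMeasurable c (volume.restrict (Icc 0 1))) (hcC : ∀ t, ‖c t‖ ≤ C) :
    Integrable (fun t => c t * lowerOrthantIntegral h t) (volume.restrict (Icc 0 1)) :=
  (integrable_lowerOrthantIntegral hh h0).bdd_mul hc (.of_forall hcC)

theorem average_sub_integral_eq_integral_mul {N : ℕ} (x : Fin N → Fin d → ℝ)
    (hx : ∀ j, x j ∈ Icc 0 1) {h φ : (Fin d → ℝ) → ℝ}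
    (hh : Integrable h (volume.restrict (Icc 0 1))) (h0 : 0 ≤ h)
    (hrepr : ∀ z ∈ Icc (0 : Fin d → ℝ) 1, φ z = ∫ y in Icc 0 1, kerK z y * h y) :
    (1 / (N : ℝ)) * ∑ j, φ (x j) - ∫ z in Icc 0 1, φ z
      = ∫ t in Icc 0 1, ((1 / (N : ℝ)) * ∑ j, strongLTIndicator (x j) t
          - ∫ z in Icc 0 1, strongLTIndicator z t) * lowerOrthantIntegral h t := by
  have hrepr' (z) (hz : z ∈ Icc (0 : Fin d → ℝ) 1) :
      φ z = ∫ t in Icc 0 1, strongLTIndicator z t * lowerOrthantIntegral h t :=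
    (hrepr z hz).trans (integral_kerK_mul_eq hh hz)
  have hint (z : Fin d → ℝ) :=
    integrable_mul_lowerOrthantIntegral (c := strongLTIndicator z) hh h0
    (measurable_uncurry_strongLTIndicator.comp measurable_prodMk_left).aestronglyMeasurable
    (norm_strongLTIndicator_le z)
  have hvol_int := integrable_mul_lowerOrthantIntegral hh h0
    measurable_uncurry_strongLTIndicator.stronglyMeasurable.integral_prod_left.aestronglyMeasurable
    fun t => by
      simpa using norm_integral_le_of_norm_le_const (μ := volume.restrict (Icc 0 1))
        (.of_forall fun z => norm_strongLTIndicator_le z t)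
  have hsample : (1 / (N : ℝ)) * ∑ j, φ (x j)
      = ∫ t in Icc 0 1,
          (1 / (N : ℝ)) * ∑ j, strongLTIndicator (x j) t * lowerOrthantIntegral h t := by
    rw [integral_const_mul, integral_finsetSum _ fun j _ => hint (x j)]
    simp_rw [hrepr' _ (hx _)]
  have hlebesgue : ∫ z in Icc 0 1, φ z
      = ∫ t in Icc 0 1, (∫ z in Icc 0 1, strongLTIndicator z t) * lowerOrthantIntegral h t :=
    (setIntegral_congr_fun measurableSet_Icc hrepr').trans
      (integral_integral_strongLTIndicator_mul (aestronglyMeasurable_lowerOrthantIntegral hh)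
        fun t => (Real.norm_of_nonneg (lowerOrthantIntegral_nonneg h0 t)).trans_le
          (lowerOrthantIntegral_le hh h0 t))
  rw [hsample, hlebesgue,
    ← integral_sub ((integrable_finsetSum _ fun j _ => hint (x j)).const_mul _) hvol_int]
  congr with t
  rw [sub_mul, mul_assoc, Finset.sum_mul]

theorem starDisc_nonneg {ι : Type*} [Fintype ι] (p : ι → Fin d → ℝ) : 0 ≤ starDisc p :=
  Real.iSup_nonneg fun _ => abs_nonneg _

theorem abs_sub_le_starDisc {ι : Type*} [Fintype ι] (p : ι → Fin d → ℝ) {t : Fin d → ℝ}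
    (ht : t ∈ Icc 0 1) :
    |(volume (Icc 0 t)).toReal
        - (∑ n, (Icc 0 t).indicator (fun _ => (1 : ℝ)) (p n)) / (Fintype.card ι : ℝ)|
      ≤ starDisc p := by
  refine le_ciSup_of_le ⟨1, ?_⟩ (⟨t, ht⟩ : Icc (0 : Fin d → ℝ) 1) le_rfl
  rintro _ ⟨s, rfl⟩
  have hcount : ∑ n, (Icc 0 s.1).indicator (fun _ => (1 : ℝ)) (p n) ≤ Fintype.card ι :=
    calc _ ≤ ∑ _n : ι, (1 : ℝ) :=
          Finset.sum_le_sum fun n _ => indicator_le_self' (fun _ _ => zero_le_one) _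
      _ = Fintype.card ι := by simp
  refine abs_sub_le_of_nonneg_of_le ENNReal.toReal_nonneg ?_
    (div_nonneg (Finset.sum_nonneg fun n _ => indicator_nonneg (fun _ _ => zero_le_one) _)
      (Nat.cast_nonneg _))
    (div_le_one_of_le₀ hcount (Nat.cast_nonneg _))
  rw [Real.volume_Icc_pi_toReal s.2.1]
  exact Finset.prod_le_one (fun i _ => sub_nonneg.2 (s.2.1 i)) fun i _ => by simpa using s.2.2 i

theorem ae_abs_sub_le_starDisc {N : ℕ} (x : Fin N → Fin d → ℝ)
    (hx : ∀ j, x j ∈ Icc 0 1) :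
    ∀ᵐ t ∂(volume.restrict (Icc (0 : Fin d → ℝ) 1)),
      |(1 / (N : ℝ)) * ∑ j, strongLTIndicator (x j) t - ∫ z in Icc 0 1, strongLTIndicator z t|
        ≤ starDisc x := by
  have hne : ∀ᵐ t ∂(volume : Measure (Fin d → ℝ)), ∀ j i, t i ≠ x j i := by
    simp only [ae_all_iff]
    intro j i
    rw [volume_pi]
    exact Measure.ae_eval_ne _ i _
  filter_upwards [ae_restrict_mem measurableSet_Icc, ae_restrict_of_ae hne] with t ht hne
  have hcount (j : Fin N) :
      strongLTIndicator (x j) t = (Icc 0 t).indicator (fun _ => 1) (x j) := by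
    have hiff : x j ≺ t ↔ x j ∈ Icc 0 t :=
      ⟨fun h => ⟨(hx j).1, fun i => (h i).le⟩, fun h i => (h.2 i).lt_of_ne (hne j i).symm⟩
    rw [strongLTIndicator_eq_indicator_right]
    by_cases hj : x j ≺ t
    · rw [indicator_of_mem hj, indicator_of_mem (hiff.1 hj), Pi.one_apply]
    · rw [indicator_of_notMem hj, indicator_of_notMem (mt hiff.2 hj)]
  simp_rw [hcount, strongLTIndicator_eq_indicator_right]
  rw [integral_indicator_one (measurableSet_setOf_strongLT_right t),
    measureReal_setOf_strongLT_right ht, abs_sub_comm]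
  simpa only [Fintype.card_fin, one_div, inv_mul_eq_div] using abs_sub_le_starDisc x ht

theorem abs_average_sub_integral_le {N : ℕ} (x : Fin N → Fin d → ℝ)
    (hx : ∀ j, x j ∈ Icc 0 1) {h φ : (Fin d → ℝ) → ℝ}
    (hh : Integrable h (volume.restrict (Icc 0 1))) (h0 : 0 ≤ h)
    (hrepr : ∀ z ∈ Icc (0 : Fin d → ℝ) 1, φ z = ∫ y in Icc 0 1, kerK z y * h y) :
    |(1 / (N : ℝ)) * ∑ j, φ (x j) - ∫ z in Icc 0 1, φ z|
      ≤ starDisc x * ∫ y in Icc 0 1, h y := by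
  rw [average_sub_integral_eq_integral_mul x hx hh h0 hrepr, ← Real.norm_eq_abs]
  have hH := integrable_lowerOrthantIntegral hh h0
  refine (norm_integral_le_of_norm_le (hH.const_mul (starDisc x)) ?_).trans ?_
  · filter_upwards [ae_abs_sub_le_starDisc x hx] with t ht
    rw [norm_mul, Real.norm_eq_abs, Real.norm_of_nonneg (lowerOrthantIntegral_nonneg h0 t)]
    exact mul_le_mul_of_nonneg_right ht (lowerOrthantIntegral_nonneg h0 t)
  calc ∫ t in Icc 0 1, starDisc x * lowerOrthantIntegral h t
      ≤ ∫ t in Icc 0 1, starDisc x * ∫ y in Icc 0 1, h y :=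
        integral_mono (hH.const_mul _) (integrable_const _) fun t =>
          mul_le_mul_of_nonneg_left (lowerOrthantIntegral_le hh h0 t) (starDisc_nonneg x)
    _ = starDisc x * ∫ y in Icc 0 1, h y := by simp

theorem sampling_inequality_Hilbert_space_general {d N : ℕ}
    (x : Fin N → Fin d → ℝ) (hx : ∀ j, x j ∈ Set.Icc (0 : Fin d → ℝ) 1)
    (γ : ℝ) (hγ : γ ∈ Set.Ioc (0:ℝ) 1)
    (f g : (Fin d → ℝ) → ℝ)
    (hgL2 : Integrable (fun y => g y ^ 2) (volume.restrict (Set.Icc (0 : Fin d → ℝ) 1)))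
    (hrepr : ∀ z ∈ Set.Icc (0 : Fin d → ℝ) 1,
      f z ^ 2 = ∫ y in Set.Icc (0 : Fin d → ℝ) 1, kerK z y * g y ^ 2)
    (hγfg : γ * ∫ y in Set.Icc (0 : Fin d → ℝ) 1, g y ^ 2
      ≤ ∫ y in Set.Icc (0 : Fin d → ℝ) 1, f y ^ 2) :
    (1 - starDisc x / γ) * (∫ y in Set.Icc (0 : Fin d → ℝ) 1, f y ^ 2)
        ≤ (1 / (N : ℝ)) * ∑ j, f (x j) ^ 2 ∧
    (1 / (N : ℝ)) * ∑ j, f (x j) ^ 2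
        ≤ (1 + starDisc x / γ) * ∫ y in Set.Icc (0 : Fin d → ℝ) 1, f y ^ 2 := by
  have hcore := abs_average_sub_integral_le x hx hgL2 (fun y => sq_nonneg (g y)) hrepr
  have hdisc : starDisc x * ∫ y in Icc 0 1, g y ^ 2
      ≤ starDisc x / γ * ∫ y in Icc 0 1, f y ^ 2 := by
    rw [div_mul_eq_mul_div, le_div_iff₀ hγ.1, mul_assoc, mul_comm _ γ]
    exact mul_le_mul_of_nonneg_left hγfg (starDisc_nonneg x)
  rw [abs_le] at hcore
  constructor <;> linarith [hcore.1, hcore.2]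

theorem sampling_inequality_Hilbert_space {d N : ℕ}
    (x : Fin N → Fin d → ℝ) (hx : ∀ j, x j ∈ Set.Icc (0 : Fin d → ℝ) 1)
    (γ : ℝ) (hγ : γ ∈ Set.Ioc (0:ℝ) 1)
    (f g : (Fin d → ℝ) → ℝ) (hf : Measurable f) (hg : Measurable g)
    (hgL2 : Integrable (fun y => g y ^ 2) (volume.restrict (Set.Icc (0 : Fin d → ℝ) 1)))
    (hrepr : ∀ z ∈ Set.Icc (0 : Fin d → ℝ) 1,
      f z ^ 2 = ∫ y in Set.Icc (0 : Fin d → ℝ) 1, kerK z y * g y ^ 2)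
    (hγfg : γ * ∫ y in Set.Icc (0 : Fin d → ℝ) 1, g y ^ 2
      ≤ ∫ y in Set.Icc (0 : Fin d → ℝ) 1, f y ^ 2) :
    (1 - starDisc x / γ) * (∫ y in Set.Icc (0 : Fin d → ℝ) 1, f y ^ 2)
        ≤ (1 / (N : ℝ)) * ∑ j, f (x j) ^ 2 ∧
    (1 / (N : ℝ)) * ∑ j, f (x j) ^ 2
        ≤ (1 + starDisc x / γ) * ∫ y in Set.Icc (0 : Fin d → ℝ) 1, f y ^ 2 :=
  sampling_inequality_Hilbert_space_general x hx γ hγ f g hgL2 hrepr hγfg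
end

section
/- Let N ≥ 2 and let Ω_1,…,Ω_N be an equivolume partition of [0,1]^d. Then it is not the case that for every i ∈ {1,…,N} and Lebesgue-almost every x ∈ [0,1]^d one has N·λ(Ω_i ∩ [0,x]) = λ([0,x]). Consequently, there exists x ∈ [0,1]^d with ∑_{i=1}^N λ(Ω_i ∩ [0,x])² > λ([0,x])²/N, i.e., a point x at which the stratified-sample variance N·λ([0,x]) − N²·∑_i λ(Ω_i ∩ [0,x])² is strictly smaller than the Monte Carlo variance N·λ([0,x])·(1 − λ([0,x])). -/
open MeasureTheory Real Set
open scoped ENNReal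

def IsEquivolumePartition {d N : ℕ} (Os : Fin N → Set (Fin d → ℝ)) : Prop :=
  (∀ i, MeasurableSet (Os i)) ∧
  (Pairwise fun i j => Disjoint (Os i) (Os j)) ∧
  (⋃ i, Os i) = Set.Icc (0 : Fin d → ℝ) 1 ∧
  ∀ i, volume (Os i) = (N : ℝ≥0∞)⁻¹

/-!
If `N λ(Ω_i ∩ [0,x]) = λ([0,x])` held for almost every `x` in the cube, it would hold for every
`x`, since for a set inside the unit cube `t ↦ λ(A ∩ Iic t)` is Lipschitz. Then the finite
measures `N • λ|Ω_i` and `λ|[0,1]^d` have the same distribution function, hence coincide, and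
evaluating them on `Ω_i` gives `N λ(Ω_i) = λ(Ω_i)`, i.e. `N = 1`.

At a point `x` where the identity fails for some `i`, the numbers `a_j = λ(Ω_j ∩ [0,x])` sum to
`λ([0,x])` and `a_i` differs from their mean, so Cauchy–Schwarz is strict:
`(∑ a_j)² / N < ∑ a_j²`.
-/

open Function (update)

theorem sq_sum_div_card_lt_sum_sq {ι : Type*} [Fintype ι] (a : ι → ℝ) (j : ι)
    (hj : Fintype.card ι * a j ≠ ∑ i, a i) :
    (∑ i, a i) ^ 2 / Fintype.card ι < ∑ i, a i ^ 2 := by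
  set n : ℝ := (Fintype.card ι : ℝ)
  have hn : 0 < n := by
    have : Nonempty ι := ⟨j⟩
    simp only [n]; positivity
  set m := (∑ i, a i) / n
  have hdev : 0 < ∑ i, (a i - m) ^ 2 := by
    have hjm : a j - m ≠ 0 := fun h => hj <| by
      rw [sub_eq_zero.1 h]; simp only [m]; field_simp
    exact Finset.sum_pos' (fun i _ => sq_nonneg _) ⟨j, Finset.mem_univ j, by positivity⟩
  have hexpand : ∑ i, (a i - m) ^ 2 = ∑ i, a i ^ 2 - (∑ i, a i) ^ 2 / n := by
    simp only [sub_sq, Finset.sum_add_distrib, Finset.sum_sub_distrib, ← Finset.sum_mul,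
      ← Finset.mul_sum, Finset.sum_const, Finset.card_univ, nsmul_eq_mul, m, n]
    field_simp
    ring
  linarith

theorem measurableSpace_pi_eq_generateFrom_Iic (ι : Type*) [Fintype ι] :
    (inferInstance : MeasurableSpace (ι → ℝ)) = MeasurableSpace.generateFrom (range Iic) := by
  have hspan : IsCountablySpanning (range (Iic : ℝ → Set ℝ)) :=
    ⟨fun n => Iic n, fun n => mem_range_self _, iUnion_eq_univ_iff.2 fun x =>
      ⟨⌈x⌉₊, Nat.le_ceil x⟩⟩
  have hbox : pi univ '' pi univ (fun _ : ι => range (Iic : ℝ → Set ℝ)) = range Iic := by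
    ext S
    constructor
    · rintro ⟨s, hs, rfl⟩
      choose t ht using fun i => hs i (mem_univ i)
      exact ⟨t, by rw [← pi_univ_Iic]; simp only [ht]⟩
    · rintro ⟨t, rfl⟩
      exact ⟨fun i => Iic (t i), fun i _ => mem_range_self _, pi_univ_Iic t⟩
  rw [← hbox, generateFrom_eq_pi (fun _ => (borel_eq_generateFrom_Iic ℝ).symm.trans
    BorelSpace.measurable_eq.symm) fun _ => hspan]

theorem MeasureTheory.Measure.ext_of_Iic_pi {ι : Type*} [Fintype ι] {μ ν : Measure (ι → ℝ)}
    [IsFiniteMeasure μ] (h : ∀ t, μ (Iic t) = ν (Iic t)) : μ = ν :=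
  Measure.ext_of_generateFrom_of_iUnion _ (fun n : ℕ => Iic fun _ => (n : ℝ))
    (measurableSpace_pi_eq_generateFrom_Iic ι)
    (by rintro _ ⟨a, rfl⟩ _ ⟨b, rfl⟩ -; exact ⟨a ⊓ b, Iic_inter_Iic.symm⟩)
    (iUnion_eq_univ_iff.2 fun x => ⟨⌈⨆ i, x i⌉₊, fun i =>
      (le_ciSup (Finite.bddAbove_range x) i).trans (Nat.le_ceil _)⟩)
    (fun _ => mem_range_self _) (fun _ => measure_ne_top _ _) (by rintro _ ⟨t, rfl⟩; exact h t)

section UnitCube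

variable {d : ℕ}

theorem volume_Icc_update_zero_one (j : Fin d) (a b : ℝ) :
    volume (Icc (update (0 : Fin d → ℝ) j a) (update 1 j b)) = ENNReal.ofReal (b - a) := by
  rw [Real.volume_Icc_pi, Finset.prod_eq_single j]
  · simp
  · intro k _ hk
    simp [Function.update_of_ne hk]
  · simp

theorem volume_real_inter_Iic_le_add {A : Set (Fin d → ℝ)} (hA : A ⊆ Icc 0 1)
    (s t : Fin d → ℝ) : volume.real (A ∩ Iic t) ≤ volume.real (A ∩ Iic s) + d * dist t s := by
  set r := dist t s
  set slab : Fin d → Set (Fin d → ℝ) := fun j => Icc (update 0 j (s j)) (update 1 j (s j + r))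
  -- a point of `A ∩ Iic t` outside `Iic s` exceeds `s` in some coordinate `j`, by at most `r`
  have hcover : A ∩ Iic t ⊆ (A ∩ Iic s) ∪ ⋃ j, slab j := by
    rintro y ⟨hyA, hyt⟩
    by_cases hys : y ≤ s
    · exact Or.inl ⟨hyA, hys⟩
    obtain ⟨j, hj⟩ : ∃ j, s j < y j := by simpa [Pi.le_def] using hys
    have hyt' : y j ≤ s j + r := by
      linarith [hyt j, (le_abs_self _).trans (dist_le_pi_dist t s j), Real.dist_eq (t j) (s j)]
    refine Or.inr (mem_iUnion.2 ⟨j, fun k => ?_, fun k => ?_⟩)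
    · rcases eq_or_ne k j with rfl | hk
      · simpa using hj.le
      · simpa [Function.update_of_ne hk] using (hA hyA).1 k
    · rcases eq_or_ne k j with rfl | hk
      · simpa using hyt'
      · simpa [Function.update_of_ne hk] using (hA hyA).2 k
  have hfin : volume ((A ∩ Iic s) ∪ ⋃ j, slab j) ≠ ∞ :=
    ((measure_union_le _ _).trans_lt (ENNReal.add_lt_top.2
      ⟨(measure_mono (inter_subset_left.trans hA)).trans_lt measure_Icc_lt_top,
        (measure_iUnion_fintype_le _ _).trans_lt
          (ENNReal.sum_lt_top.2 fun _ _ => measure_Icc_lt_top)⟩)).ne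
  calc volume.real (A ∩ Iic t)
      ≤ volume.real (A ∩ Iic s) + ∑ j, volume.real (slab j) :=
        (measureReal_mono hcover hfin).trans
          ((measureReal_union_le _ _).trans (add_le_add_right (measureReal_iUnion_fintype_le _) _))
    _ = volume.real (A ∩ Iic s) + d * r := by
        simp [slab, measureReal_def, volume_Icc_update_zero_one, dist_nonneg, r]

theorem lipschitzWith_volume_real_inter_Iic {A : Set (Fin d → ℝ)} (hA : A ⊆ Icc 0 1) :
    LipschitzWith d fun t => volume.real (A ∩ Iic t) :=
  LipschitzWith.of_le_add_mul d fun t s => volume_real_inter_Iic_le_add hA s t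

theorem Icc_zero_one_subset_closure_interior :
    Icc (0 : Fin d → ℝ) 1 ⊆ closure (interior (Icc 0 1)) := by
  rw [(convex_Icc (0 : Fin d → ℝ) 1).closure_interior_eq_closure_of_nonempty_interior (𝕜 := ℝ)
    ⟨fun _ => 1 / 2, mem_interior_iff_mem_nhds.2 (pi_Icc_mem_nhds (by norm_num) (by norm_num))⟩]
  exact subset_closure

theorem inter_Iic_inf_one {A : Set (Fin d → ℝ)} (hA : A ⊆ Icc 0 1) (t : Fin d → ℝ) :
    A ∩ Iic (t ⊓ 1) = A ∩ Iic t := by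
  ext y
  simp only [mem_inter_iff, mem_Iic, le_inf_iff, and_congr_right_iff, and_iff_left_iff_imp]
  exact fun hy _ => (hA hy).2

theorem inter_Iic_eq_empty {A : Set (Fin d → ℝ)} (hA : A ⊆ Icc 0 1) {t : Fin d → ℝ} {j : Fin d}
    (hj : t j < 0) : A ∩ Iic t = ∅ :=
  eq_empty_of_forall_notMem fun _ ⟨hyA, hyt⟩ => ((hA hyA).1 j).not_gt (lt_of_le_of_lt (hyt j) hj)

theorem mul_volume_real_inter_Iic_eq_of_ae {A : Set (Fin d → ℝ)} (hA : A ⊆ Icc 0 1) {c : ℝ}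
    (h : ∀ᵐ x ∂(volume.restrict (Icc (0 : Fin d → ℝ) 1)),
      c * volume.real (A ∩ Icc 0 x) = volume.real (Icc 0 x)) (t : Fin d → ℝ) :
    c * volume.real (A ∩ Iic t) = volume.real (Icc 0 1 ∩ Iic t) := by
  have hcube : EqOn (fun t => c * volume.real (A ∩ Iic t))
      (fun t => volume.real (Icc 0 1 ∩ Iic t)) (Icc 0 1) := by
    refine Measure.eqOn_of_ae_eq (μ := volume) ?_
      ((lipschitzWith_volume_real_inter_Iic hA).continuous.continuousOn.const_smul c)
      (lipschitzWith_volume_real_inter_Iic subset_rfl).continuous.continuousOn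
      Icc_zero_one_subset_closure_interior
    filter_upwards [h, ae_restrict_mem measurableSet_Icc] with x hx hx1
    have hIcc : Icc 0 x = Icc 0 1 ∩ Iic x :=
      Subset.antisymm (fun y hy => ⟨⟨hy.1, hy.2.trans hx1.2⟩, hy.2⟩) fun y hy => ⟨hy.1.1, hy.2⟩
    rwa [hIcc, ← inter_assoc, inter_eq_left.2 hA] at hx
  by_cases ht : 0 ≤ t
  · rw [← inter_Iic_inf_one hA, ← inter_Iic_inf_one subset_rfl]
    exact hcube ⟨le_inf ht zero_le_one, inf_le_right⟩
  · obtain ⟨j, hj⟩ : ∃ j, t j < 0 := by simpa [Pi.le_def] using ht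
    simp [inter_Iic_eq_empty hA hj, inter_Iic_eq_empty subset_rfl hj]

theorem eq_one_of_ae_mul_volume_real_inter_Icc_eq {A : Set (Fin d → ℝ)} (hAm : MeasurableSet A)
    (hA : A ⊆ Icc 0 1) (hA0 : volume A ≠ 0) {c : ℝ} (hc : 0 ≤ c)
    (h : ∀ᵐ x ∂(volume.restrict (Icc (0 : Fin d → ℝ) 1)),
      c * volume.real (A ∩ Icc 0 x) = volume.real (Icc 0 x)) : c = 1 := by
  have hfin {B : Set (Fin d → ℝ)} (hB : B ⊆ Icc 0 1) : volume B ≠ ∞ :=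
    ((measure_mono hB).trans_lt measure_Icc_lt_top).ne
  have hcdf : volume.restrict (Icc (0 : Fin d → ℝ) 1) = ENNReal.ofReal c • volume.restrict A := by
    have := isFiniteMeasure_restrict.2 (hfin (subset_refl (Icc (0 : Fin d → ℝ) 1)))
    refine Measure.ext_of_Iic_pi fun t => ?_
    rw [Measure.smul_apply, Measure.restrict_apply measurableSet_Iic,
      Measure.restrict_apply measurableSet_Iic, smul_eq_mul, inter_comm, inter_comm _ A,
      ← ofReal_measureReal (hfin inter_subset_left),
      ← ofReal_measureReal (hfin (inter_subset_left.trans hA)), ← ENNReal.ofReal_mul hc,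
      mul_volume_real_inter_Iic_eq_of_ae hA h t]
  -- evaluated on `A`, the identity of measures reads `λ A = c λ A`
  have hA1 := congrArg (· A) hcdf
  simp only [Measure.smul_apply, Measure.restrict_apply hAm, inter_self,
    inter_eq_left.2 hA, smul_eq_mul] at hA1
  exact ENNReal.ofReal_eq_one.1 ((ENNReal.mul_eq_right hA0 (hfin hA)).1 hA1.symm)

end UnitCube

theorem IsEquivolumePartition.volume_real_Icc_eq_sum {d N : ℕ} {Os : Fin N → Set (Fin d → ℝ)}
    (hpart : IsEquivolumePartition Os) {x : Fin d → ℝ} (hx : x ≤ 1) :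
    volume.real (Icc 0 x) = ∑ i, volume.real (Os i ∩ Icc 0 x) := by
  obtain ⟨hmeas, hdisj, hcover, -⟩ := hpart
  rw [← measureReal_iUnion_fintype
    (fun i j hij => (hdisj hij).mono inter_subset_left inter_subset_left)
    (fun i => (hmeas i).inter measurableSet_Icc)
    (fun i => ((measure_mono inter_subset_right).trans_lt measure_Icc_lt_top).ne),
    ← iUnion_inter, hcover, inter_eq_right.2 (Icc_subset_Icc_right hx)]

theorem exists_box_with_strict_variance_gain {d N : ℕ} (hN : 2 ≤ N)
    (Os : Fin N → Set (Fin d → ℝ)) (hpart : IsEquivolumePartition Os) :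
    ¬ (∀ i : Fin N, ∀ᵐ x ∂(volume.restrict (Set.Icc (0 : Fin d → ℝ) 1)),
        (N : ℝ) * (volume (Os i ∩ Set.Icc 0 x)).toReal
          = (volume (Set.Icc (0 : Fin d → ℝ) x)).toReal) ∧
    ∃ x ∈ Set.Icc (0 : Fin d → ℝ) 1,
      (volume (Set.Icc (0 : Fin d → ℝ) x)).toReal ^ 2 / (N : ℝ)
        < ∑ i, (volume (Os i ∩ Set.Icc 0 x)).toReal ^ 2 := by
  simp only [← measureReal_def]
  have hnot : ¬ ∀ i : Fin N, ∀ᵐ x ∂(volume.restrict (Icc (0 : Fin d → ℝ) 1)),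
      (N : ℝ) * volume.real (Os i ∩ Icc 0 x) = volume.real (Icc 0 x) := fun h => by
    obtain ⟨hmeas, -, hcover, hvol⟩ := hpart
    let i : Fin N := ⟨0, by omega⟩
    have := eq_one_of_ae_mul_volume_real_inter_Icc_eq (hmeas i) (hcover ▸ subset_iUnion Os i)
      (by simp [hvol]) (Nat.cast_nonneg N) (h i)
    norm_cast at this
    omega
  refine ⟨hnot, ?_⟩
  obtain ⟨i, hi⟩ := not_forall.1 hnot
  obtain ⟨x, hx, hxcube⟩ :=
    ((Filter.not_eventually.1 hi).and_eventually (ae_restrict_mem measurableSet_Icc)).exists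
  refine ⟨x, hxcube, ?_⟩
  rw [hpart.volume_real_Icc_eq_sum hxcube.2] at hx ⊢
  simpa using sq_sum_div_card_lt_sum_sq (fun j => volume.real (Os j ∩ Icc 0 x)) i
    (by simpa using hx)
end

section
/- Let Ω ⊆ [0,1]^d be a convex set. Then limsup_{ε → 0+} λ((∂Ω)_ε)/(2ε) ≤ 2d, where (∂Ω)_ε = {x ∈ ℝ^d : dist(x, ∂Ω) ≤ ε} is the closed ε-neighborhood of the topological boundary ∂Ω of Ω, and λ denotes Lebesgue measure on ℝ^d. (In words: the (d−1)-dimensional upper Minkowski content of the boundary of a convex subset of the unit cube is at most the surface area 2d of the cube.) -/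
/-!
Let `C` be the closure of `S`, a compact convex subset of the cube. A point at distance less
than `ε` from `∂S` lies either in the outer shell `(C + B_ε) \ C` or in the inner shell
`C \ (C ⊖ B_ε)`; passing to the sup norm only enlarges these shells. The sup-norm ball `B_ε` is
the Minkowski sum of the `d` axis segments `[-ε, ε] eᵢ`, so each shell is swept out one direction
at a time. Every line parallel to `eᵢ` meets a convex set in an interval, and dilating or eroding
an interval by `[-ε, ε]` changes its length by at most `2ε`; by Fubini one direction therefore
changes the volume by at most `2ε` times the area of a face of `[-ε, 1 + ε]^d` (of `[0, 1]^d`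
when eroding). Altogether
`λ((∂S)_ε) ≤ 2ε d ((1 + 2ε)^(d-1) + 1)`, and the quotient by `2ε` tends to `2d`.
-/

open MeasureTheory Metric Set Filter
open scoped ENNReal Topology

/-- The closed unit cube `[0,1]^d` in Euclidean space. -/
def unitCube (d : ℕ) : Set (EuclideanSpace ℝ (Fin d)) :=
  {x | ∀ j, x j ∈ Set.Icc (0 : ℝ) 1}

open Function
open scoped Pointwise

/-- The Minkowski difference `A ⊖ P`. -/
def erosion {E : Type*} [Add E] (A P : Set E) : Set E :=
  {x | ∀ v ∈ P, x + v ∈ A}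

section Erosion

variable {E : Type*} [AddCommGroup E] {A P Q : Set E}

theorem erosion_add : erosion A (P + Q) = erosion (erosion A P) Q := by
  ext x
  constructor
  · intro h q hq p hp
    rw [add_assoc, add_comm q]
    exact h (p + q) (add_mem_add hp hq)
  · rintro h _ ⟨p, hp, q, hq, rfl⟩
    simpa only [add_comm p, ← add_assoc] using h q hq p hp

theorem erosion_zero : erosion A 0 = A := by
  simp [erosion]

theorem erosion_subset (h : (0 : E) ∈ P) : erosion A P ⊆ A :=
  fun x hx => by simpa using hx 0 h

theorem erosion_anti (h : P ⊆ Q) : erosion A Q ⊆ erosion A P :=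
  fun _ hx v hv => hx v (h hv)

theorem convex_erosion [Module ℝ E] (hA : Convex ℝ A) : Convex ℝ (erosion A P) := by
  have : erosion A P = ⋂ v ∈ P, (· + v) ⁻¹' A := by ext; simp [erosion]
  rw [this]
  exact convex_iInter₂ fun v _ => by simpa using hA.translate_preimage_left v

theorem isClosed_erosion [TopologicalSpace E] [ContinuousAdd E] (hA : IsClosed A) :
    IsClosed (erosion A P) := by
  have : erosion A P = ⋂ v ∈ P, (· + v) ⁻¹' A := by ext; simp [erosion]
  rw [this]
  exact isClosed_biInter fun v _ => hA.preimage (continuous_add_const v)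

end Erosion

theorem Convex.interior_closure_eq_interior {E : Type*} [NormedAddCommGroup E] [NormedSpace ℝ E]
    [FiniteDimensional ℝ E] {s : Set E} (hs : Convex ℝ s) : interior (closure s) = interior s := by
  rcases (interior s).eq_empty_or_nonempty with h | h
  · rw [h, ← not_nonempty_iff_eq_empty, hs.closure.interior_nonempty_iff_affineSpan_eq_top]
    intro htop
    have hspan : affineSpan ℝ (closure s) ≤ affineSpan ℝ s := affineSpan_le.2 <|
      closure_minimal (subset_affineSpan ℝ s) (affineSpan ℝ s).closed_of_finiteDimensional
    rw [htop, top_le_iff, ← hs.interior_nonempty_iff_affineSpan_eq_top, h] at hspan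
    exact not_nonempty_empty hspan
  · exact hs.interior_closure_eq_interior_of_nonempty_interior h

theorem Convex.thickening_frontier_subset {E : Type*} [NormedAddCommGroup E] [NormedSpace ℝ E]
    [FiniteDimensional ℝ E] {s : Set E} (hs : Convex ℝ s) (δ : ℝ) :
    Metric.thickening δ (frontier s) ⊆
      (closure s + closedBall 0 δ) \ closure s ∪
        closure s \ erosion (closure s) (closedBall 0 δ) := by
  intro x hx
  obtain ⟨b, hb, hxb⟩ := mem_thickening_iff.1 hx
  by_cases hxs : x ∈ closure s
  · refine Or.inr ⟨hxs, fun hx_er => hb.2 ?_⟩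
    have hball : ball x δ ⊆ closure s := fun u hu => by
      simpa using hx_er (u - x) (by simpa [dist_eq_norm] using (mem_ball.1 hu).le)
    rw [← hs.interior_closure_eq_interior]
    exact interior_maximal hball isOpen_ball (mem_ball_comm.1 hxb)
  · exact Or.inl ⟨⟨b, frontier_subset_closure hb, x - b,
      by simpa [dist_eq_norm] using hxb.le, add_sub_cancel b x⟩, hxs⟩

theorem Convex.Ioo_csInf_csSup_subset {s : Set ℝ} (hs : Convex ℝ s) (hb : Bornology.IsBounded s) :
    Ioo (sInf s) (sSup s) ⊆ s := by
  rcases s.eq_empty_or_nonempty with rfl | hne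
  · simp
  · exact IsConnected.Ioo_csInf_csSup_subset ⟨hne, hs.isPreconnected⟩ hb.bddBelow hb.bddAbove

theorem Convex.volume_add_Icc_le {s : Set ℝ} (hs : Convex ℝ s) (hb : Bornology.IsBounded s)
    (δ : ℝ) : volume (s + Icc (-δ) δ) ≤ volume s + ENNReal.ofReal (2 * δ) := by
  have hsub : s + Icc (-δ) δ ⊆ Icc (sInf s - δ) (sSup s + δ) := by
    rintro _ ⟨y, hy, z, hz, rfl⟩
    have hy' := hb.subset_Icc_sInf_sSup hy
    exact ⟨by linarith [hy'.1, hz.1], by linarith [hy'.2, hz.2]⟩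
  calc volume (s + Icc (-δ) δ) ≤ volume (Icc (sInf s - δ) (sSup s + δ)) := measure_mono hsub
    _ = ENNReal.ofReal ((sSup s - sInf s) + 2 * δ) := by rw [Real.volume_Icc]; ring_nf
    _ ≤ volume (Ioo (sInf s) (sSup s)) + ENNReal.ofReal (2 * δ) := by
      rw [Real.volume_Ioo]; exact ENNReal.ofReal_add_le
    _ ≤ volume s + ENNReal.ofReal (2 * δ) := by
      gcongr; exact hs.Ioo_csInf_csSup_subset hb

theorem Convex.volume_le_erosion_Icc_add {s : Set ℝ} (hs : Convex ℝ s)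
    (hb : Bornology.IsBounded s) (δ : ℝ) :
    volume s ≤ volume (erosion s (Icc (-δ) δ)) + ENNReal.ofReal (2 * δ) := by
  have hsub : Ioo (sInf s + δ) (sSup s - δ) ⊆ erosion s (Icc (-δ) δ) := fun y hy z hz =>
    hs.Ioo_csInf_csSup_subset hb ⟨by linarith [hy.1, hz.1], by linarith [hy.2, hz.2]⟩
  calc volume s ≤ volume (Icc (sInf s) (sSup s)) := measure_mono hb.subset_Icc_sInf_sSup
    _ = ENNReal.ofReal ((sSup s - sInf s - 2 * δ) + 2 * δ) := by rw [Real.volume_Icc]; ring_nf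
    _ ≤ volume (Ioo (sInf s + δ) (sSup s - δ)) + ENNReal.ofReal (2 * δ) := by
      rw [Real.volume_Ioo, show sSup s - δ - (sInf s + δ) = sSup s - sInf s - 2 * δ by ring]
      exact ENNReal.ofReal_add_le
    _ ≤ volume (erosion s (Icc (-δ) δ)) + ENNReal.ofReal (2 * δ) := by gcongr

theorem add_subset_pi_Icc {ι : Type*} [Fintype ι] {C P : Set (ι → ℝ)} {a b δ : ℝ}
    (hC : C ⊆ univ.pi fun _ => Icc a b) (hP : P ⊆ closedBall 0 δ) :
    C + P ⊆ univ.pi fun _ => Icc (a - δ) (b + δ) := by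
  rintro _ ⟨c, hc, v, hv, rfl⟩ j -
  have hcj := hC hc j (mem_univ j)
  have hvj := abs_le.1 ((Real.norm_eq_abs (v j) ▸ norm_le_pi_norm v j).trans
    (mem_closedBall_zero_iff.1 (hP hv)))
  show c j + v j ∈ Icc (a - δ) (b + δ)
  exact ⟨by linarith [hcj.1, hvj.1], by linarith [hcj.2, hvj.2]⟩

section PiSlices

variable {ι : Type*} [DecidableEq ι]

theorem update_add_single (x : ι → ℝ) (i : ι) (y t : ℝ) :
    update x i y + Pi.single i t = update x i (y + t) := by
  rw [Pi.single, ← update_add, add_zero]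

theorem preimage_update_add_image_single (A : Set (ι → ℝ)) (I : Set ℝ) (x : ι → ℝ) (i : ι) :
    update x i ⁻¹' (A + Pi.single i '' I) = update x i ⁻¹' A + I := by
  ext y
  constructor
  · rintro ⟨a, ha, _, ⟨t, ht, rfl⟩, hy⟩
    have hya : update x i (y - t) = a :=
      add_right_cancel (b := Pi.single i t) <| by
        rw [update_add_single, sub_add_cancel]; exact hy.symm
    exact ⟨y - t, by rwa [mem_preimage, hya], t, ht, sub_add_cancel y t⟩
  · rintro ⟨y', hy', t, ht, rfl⟩
    exact ⟨_, hy', _, ⟨t, ht, rfl⟩, update_add_single x i y' t⟩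

theorem preimage_update_erosion_image_single (A : Set (ι → ℝ)) (I : Set ℝ) (x : ι → ℝ)
    (i : ι) : update x i ⁻¹' erosion A (Pi.single i '' I) = erosion (update x i ⁻¹' A) I := by
  ext y
  simp [erosion, update_add_single]

theorem Convex.preimage_update {A : Set (ι → ℝ)} (hA : Convex ℝ A) (x : ι → ℝ) (i : ι) :
    Convex ℝ (update x i ⁻¹' A) :=
  convex_iff_segment_subset.2 fun _ h₁ _ h₂ => by
    rw [← image_subset_iff, Pi.image_update_segment]
    exact hA.segment_subset h₁ h₂

theorem forall_ne_mem_Icc_of_preimage_update_nonempty {A : Set (ι → ℝ)} {a b : ℝ}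
    (hA : A ⊆ univ.pi fun _ => Icc a b) {x : ι → ℝ} {i : ι} (h : (update x i ⁻¹' A).Nonempty) :
    ∀ j ≠ i, x j ∈ Icc a b := fun j hj => by
  obtain ⟨y, hy⟩ := h
  simpa [update_of_ne hj] using hA hy j (mem_univ j)

theorem isBounded_preimage_update {A : Set (ι → ℝ)} {a b : ℝ} (hA : A ⊆ univ.pi fun _ => Icc a b)
    (x : ι → ℝ) (i : ι) : Bornology.IsBounded (update x i ⁻¹' A) :=
  isBounded_Icc a b |>.subset fun y hy => by simpa using hA hy i (mem_univ i)

theorem volume_le_add_of_volume_preimage_update_le [Fintype ι] {A B R : Set (ι → ℝ)}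
    (hA : MeasurableSet A) (hB : MeasurableSet B) (hR : MeasurableSet R) (i : ι)
    (h : ∀ x, volume (update x i ⁻¹' B) ≤ volume (update x i ⁻¹' A) + volume (update x i ⁻¹' R)) :
    volume B ≤ volume A + volume R := by
  have hslice : ∀ {C : Set (ι → ℝ)}, MeasurableSet C → ∀ x,
      ∫⁻ y, C.indicator 1 (update x i y) = volume (update x i ⁻¹' C) := fun hC x =>
    lintegral_indicator_one (hC.preimage (measurable_update x))
  have hA1 : Measurable (A.indicator (1 : (ι → ℝ) → ℝ≥0∞)) := measurable_one.indicator hA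
  rw [← lintegral_indicator_one hB, ← lintegral_indicator_one hA, ← lintegral_indicator_one hR,
    ← lintegral_add_left hA1, volume_pi]
  refine lintegral_le_of_lmarginal_le {i} (measurable_one.indicator hB)
    (hA1.add (measurable_one.indicator hR)) ?_
  intro x
  simp only [lmarginal_singleton]
  rw [lintegral_add_left (f := fun y => A.indicator 1 (update x i y))
    (hA1.comp (measurable_update x)), hslice hB, hslice hA, hslice hR]
  exact h x

/-- Its slices in direction `i` are `[0, 2δ]` above the face of `[a, b]^ι` and empty elsewhere,
so it turns a bound `2δ` on the growth of slices into a bound on volumes. -/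
def slab (a b δ : ℝ) (i : ι) : Set (ι → ℝ) :=
  univ.pi (update (fun _ => Icc a b) i (Icc 0 (2 * δ)))

theorem measurableSet_slab [Fintype ι] (a b δ : ℝ) (i : ι) : MeasurableSet (slab a b δ i) :=
  MeasurableSet.univ_pi fun _ => by rw [update_apply]; split_ifs <;> exact measurableSet_Icc

theorem volume_slab [Fintype ι] (a b δ : ℝ) (i : ι) :
    volume (slab a b δ i) =
      ENNReal.ofReal (2 * δ) * ENNReal.ofReal (b - a) ^ (Fintype.card ι - 1) := by
  rw [slab, volume_pi_pi, Fintype.prod_eq_mul_prod_compl i, update_self, Real.volume_Icc,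
    sub_zero, Finset.prod_congr rfl fun j hj => by
      rw [update_of_ne (Finset.notMem_singleton.1 (Finset.mem_compl.1 hj)), Real.volume_Icc],
    Finset.prod_const, Finset.card_compl, Finset.card_singleton]

theorem preimage_update_slab {a b δ : ℝ} {x : ι → ℝ} {i : ι} (hx : ∀ j ≠ i, x j ∈ Icc a b) :
    update x i ⁻¹' slab a b δ i = Icc 0 (2 * δ) := by
  rw [slab, update_preimage_univ_pi fun j hj => by simpa [update_of_ne hj] using hx j hj,
    update_self]

def axisSegment (δ : ℝ) (i : ι) : Set (ι → ℝ) :=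
  Pi.single i '' Icc (-δ) δ

theorem isCompact_axisSegment (δ : ℝ) (i : ι) : IsCompact (axisSegment δ i) :=
  isCompact_Icc.image (continuous_single (A := fun _ => ℝ) i)

theorem apply_eq_zero_of_mem_axisSegment {δ : ℝ} {i : ι} {v : ι → ℝ} (hv : v ∈ axisSegment δ i)
    {j : ι} (hj : j ≠ i) : v j = 0 := by
  obtain ⟨t, -, rfl⟩ := hv
  exact Pi.single_eq_of_ne (M := fun _ => ℝ) hj t

theorem convex_sum_axisSegment (δ : ℝ) (s : Finset ι) : Convex ℝ (∑ i ∈ s, axisSegment δ i) :=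
  Finset.sum_induction _ _ (fun _ _ => Convex.add) convex_zero fun i _ =>
    (convex_Icc (-δ) δ).linear_image (LinearMap.single ℝ (fun _ => ℝ) i)

theorem isCompact_sum_axisSegment (δ : ℝ) (s : Finset ι) :
    IsCompact (∑ i ∈ s, axisSegment δ i) :=
  Finset.sum_induction _ _ (fun _ _ => IsCompact.add) isCompact_singleton fun i _ =>
    isCompact_axisSegment δ i

theorem zero_mem_sum_axisSegment {δ : ℝ} (hδ : 0 ≤ δ) (s : Finset ι) :
    (0 : ι → ℝ) ∈ ∑ i ∈ s, axisSegment δ i := by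
  simpa using Set.finsetSum_mem_finsetSum s (axisSegment δ) 0 fun i _ =>
    ⟨0, ⟨neg_nonpos.2 hδ, hδ⟩, Pi.single_zero i⟩

theorem sum_axisSegment_subset_closedBall [Fintype ι] {δ : ℝ} (hδ : 0 ≤ δ) (s : Finset ι) :
    ∑ i ∈ s, axisSegment δ i ⊆ closedBall 0 δ := by
  intro v hv
  obtain ⟨g, hg, rfl⟩ := (Set.mem_finsetSum _ _ _).1 hv
  rw [mem_closedBall_zero_iff, pi_norm_le_iff_of_nonneg hδ]
  intro j
  rw [Finset.sum_apply, Real.norm_eq_abs]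
  by_cases hj : j ∈ s
  · rw [Finset.sum_eq_single_of_mem j hj fun k hk hkj =>
      apply_eq_zero_of_mem_axisSegment (hg hk) hkj.symm]
    obtain ⟨t, ht, hgj⟩ := hg hj
    simpa [← hgj] using abs_le.2 ht
  · rw [Finset.sum_eq_zero fun k hk =>
      apply_eq_zero_of_mem_axisSegment (hg hk) (ne_of_mem_of_not_mem hk hj).symm]
    simpa using hδ

theorem closedBall_subset_sum_axisSegment [Fintype ι] (δ : ℝ) :
    closedBall (0 : ι → ℝ) δ ⊆ ∑ i, axisSegment δ i := by
  intro v hv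
  rw [← Finset.univ_sum_single v]
  refine Set.finsetSum_mem_finsetSum _ _ _ fun i _ => ⟨v i, abs_le.1 ?_, rfl⟩
  exact (Real.norm_eq_abs (v i) ▸ norm_le_pi_norm v i).trans (mem_closedBall_zero_iff.1 hv)

theorem Convex.volume_add_axisSegment_le [Fintype ι] {A : Set (ι → ℝ)} {a b : ℝ}
    (hA : Convex ℝ A) (hAc : IsCompact A) (hAK : A ⊆ univ.pi fun _ => Icc a b) (δ : ℝ) (i : ι) :
    volume (A + axisSegment δ i) ≤
      volume A + ENNReal.ofReal (2 * δ) * ENNReal.ofReal (b - a) ^ (Fintype.card ι - 1) := by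
  rw [← volume_slab a b δ i]
  refine volume_le_add_of_volume_preimage_update_le hAc.measurableSet
    (hAc.add (isCompact_axisSegment δ i)).measurableSet (measurableSet_slab a b δ i)
    i fun x => ?_
  rw [axisSegment, preimage_update_add_image_single]
  rcases (update x i ⁻¹' A).eq_empty_or_nonempty with h | h
  · simp [h]
  · rw [preimage_update_slab (forall_ne_mem_Icc_of_preimage_update_nonempty hAK h),
      Real.volume_Icc, sub_zero]
    exact (hA.preimage_update x i).volume_add_Icc_le (isBounded_preimage_update hAK x i) δ

theorem Convex.volume_le_erosion_axisSegment_add [Fintype ι] {A : Set (ι → ℝ)} {a b : ℝ}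
    (hA : Convex ℝ A) (hAcl : IsClosed A) (hAK : A ⊆ univ.pi fun _ => Icc a b) (δ : ℝ) (i : ι) :
    volume A ≤ volume (erosion A (axisSegment δ i)) +
      ENNReal.ofReal (2 * δ) * ENNReal.ofReal (b - a) ^ (Fintype.card ι - 1) := by
  rw [← volume_slab a b δ i]
  refine volume_le_add_of_volume_preimage_update_le (isClosed_erosion hAcl).measurableSet
    hAcl.measurableSet (measurableSet_slab a b δ i) i fun x => ?_
  rw [axisSegment, preimage_update_erosion_image_single]
  rcases (update x i ⁻¹' A).eq_empty_or_nonempty with h | h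
  · simp [h]
  · rw [preimage_update_slab (forall_ne_mem_Icc_of_preimage_update_nonempty hAK h),
      Real.volume_Icc, sub_zero]
    exact (hA.preimage_update x i).volume_le_erosion_Icc_add (isBounded_preimage_update hAK x i) δ

theorem Convex.volume_add_sum_axisSegment_le [Fintype ι] {C : Set (ι → ℝ)} {a b δ : ℝ}
    (hC : Convex ℝ C) (hCc : IsCompact C) (hCK : C ⊆ univ.pi fun _ => Icc a b) (hδ : 0 ≤ δ)
    (s : Finset ι) :
    volume (C + ∑ i ∈ s, axisSegment δ i) ≤ volume C + s.card •
      (ENNReal.ofReal (2 * δ) * ENNReal.ofReal (b - a + 2 * δ) ^ (Fintype.card ι - 1)) := by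
  induction s using Finset.induction_on with
  | empty => simp
  | insert i s hi ih =>
    rw [Finset.sum_insert hi, add_comm (axisSegment δ i), ← add_assoc,
      Finset.card_insert_of_notMem hi, succ_nsmul, ← add_assoc]
    have hstep := (hC.add (convex_sum_axisSegment δ s)).volume_add_axisSegment_le
      (hCc.add (isCompact_sum_axisSegment δ s))
      (add_subset_pi_Icc hCK (sum_axisSegment_subset_closedBall hδ s)) δ i
    rw [show b + δ - (a - δ) = b - a + 2 * δ by ring] at hstep
    exact hstep.trans (by gcongr)

theorem Convex.volume_le_erosion_sum_axisSegment_add [Fintype ι] {C : Set (ι → ℝ)} {a b δ : ℝ}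
    (hC : Convex ℝ C) (hCcl : IsClosed C) (hCK : C ⊆ univ.pi fun _ => Icc a b) (hδ : 0 ≤ δ)
    (s : Finset ι) :
    volume C ≤ volume (erosion C (∑ i ∈ s, axisSegment δ i)) +
      s.card • (ENNReal.ofReal (2 * δ) * ENNReal.ofReal (b - a) ^ (Fintype.card ι - 1)) := by
  induction s using Finset.induction_on with
  | empty => simp [erosion_zero]
  | insert i s hi ih =>
    rw [Finset.sum_insert hi, add_comm (axisSegment δ i), erosion_add,
      Finset.card_insert_of_notMem hi, succ_nsmul, add_comm (s.card • _), ← add_assoc]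
    have hsub : erosion C (∑ i ∈ s, axisSegment δ i) ⊆ C :=
      erosion_subset (zero_mem_sum_axisSegment hδ s)
    refine ih.trans ?_
    gcongr
    exact (convex_erosion hC).volume_le_erosion_axisSegment_add (isClosed_erosion hCcl)
      (hsub.trans hCK) δ i

theorem Convex.volume_add_closedBall_diff_le [Fintype ι] {C : Set (ι → ℝ)} {a b δ : ℝ}
    (hC : Convex ℝ C) (hCc : IsCompact C) (hCK : C ⊆ univ.pi fun _ => Icc a b) (hδ : 0 ≤ δ) :
    volume ((C + closedBall 0 δ) \ C) ≤ Fintype.card ι •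
      (ENNReal.ofReal (2 * δ) * ENNReal.ofReal (b - a + 2 * δ) ^ (Fintype.card ι - 1)) := by
  have hchain := hC.volume_add_sum_axisSegment_le hCc hCK hδ Finset.univ
  rw [Finset.card_univ] at hchain
  rw [measure_sdiff_le_iff_le_add hCc.measurableSet.nullMeasurableSet
    (subset_add_left C (mem_closedBall_self hδ)) hCc.measure_lt_top.ne]
  exact (measure_mono (add_subset_add_left (closedBall_subset_sum_axisSegment δ))).trans hchain

theorem Convex.volume_diff_erosion_closedBall_le [Fintype ι] {C : Set (ι → ℝ)} {a b δ : ℝ}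
    (hC : Convex ℝ C) (hCc : IsCompact C) (hCK : C ⊆ univ.pi fun _ => Icc a b) (hδ : 0 ≤ δ) :
    volume (C \ erosion C (closedBall 0 δ)) ≤ Fintype.card ι •
      (ENNReal.ofReal (2 * δ) * ENNReal.ofReal (b - a) ^ (Fintype.card ι - 1)) := by
  have hE : erosion C (closedBall 0 δ) ⊆ C := erosion_subset (mem_closedBall_self hδ)
  have hchain := hC.volume_le_erosion_sum_axisSegment_add hCc.isClosed hCK hδ Finset.univ
  rw [Finset.card_univ] at hchain
  rw [measure_sdiff_le_iff_le_add (isClosed_erosion hCc.isClosed).measurableSet.nullMeasurableSet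
    hE ((measure_mono hE).trans_lt hCc.measure_lt_top).ne]
  refine hchain.trans ?_
  gcongr
  exact erosion_anti (closedBall_subset_sum_axisSegment δ)

theorem Convex.volume_thickening_frontier_le [Fintype ι] {T : Set (ι → ℝ)} {a b δ : ℝ}
    (hT : Convex ℝ T) (hTK : T ⊆ univ.pi fun _ => Icc a b) (hδ : 0 ≤ δ) :
    volume (Metric.thickening δ (frontier T)) ≤
      Fintype.card ι •
          (ENNReal.ofReal (2 * δ) * ENNReal.ofReal (b - a + 2 * δ) ^ (Fintype.card ι - 1)) +
        Fintype.card ι •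
          (ENNReal.ofReal (2 * δ) * ENNReal.ofReal (b - a) ^ (Fintype.card ι - 1)) := by
  have hCK : closure T ⊆ univ.pi fun _ => Icc a b :=
    closure_minimal hTK (isClosed_set_pi fun _ _ => isClosed_Icc)
  have hCc : IsCompact (closure T) :=
    (isCompact_univ_pi fun _ => isCompact_Icc).of_isClosed_subset isClosed_closure hCK
  calc volume (Metric.thickening δ (frontier T))
      ≤ volume ((closure T + closedBall 0 δ) \ closure T ∪
          closure T \ erosion (closure T) (closedBall 0 δ)) :=
        measure_mono (hT.thickening_frontier_subset δ)
    _ ≤ _ := (measure_union_le _ _).trans <| add_le_add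
        (hT.closure.volume_add_closedBall_diff_le hCc hCK hδ)
        (hT.closure.volume_diff_erosion_closedBall_le hCc hCK hδ)

end PiSlices

theorem volume_thickening_le_volume_thickening_preimage_toLp {ι : Type*} [Fintype ι]
    (F : Set (EuclideanSpace ℝ ι)) (δ : ℝ) :
    volume (thickening δ F) ≤ volume (thickening δ (WithLp.toLp 2 ⁻¹' F)) := by
  rw [← (PiLp.volume_preserving_toLp ι).measure_preimage
    isOpen_thickening.measurableSet.nullMeasurableSet]
  refine measure_mono fun x hx => ?_
  obtain ⟨z, hz, hxz⟩ := mem_thickening_iff.1 hx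
  refine mem_thickening_iff.2 ⟨WithLp.ofLp z, by simpa using hz, ?_⟩
  calc dist x (WithLp.ofLp z) ≤ dist (WithLp.toLp 2 x) z := by
        simpa using (PiLp.antilipschitzWith_toLp 2 (fun _ : ι => ℝ)).le_mul_dist x (WithLp.ofLp z)
    _ < δ := hxz

theorem Convex.volume_cthickening_frontier_le {d : ℕ} {S : Set (EuclideanSpace ℝ (Fin d))}
    (hS : Convex ℝ S) (hSsub : S ⊆ unitCube d) {ε : ℝ} (hε : 0 ≤ ε) :
    volume (Metric.cthickening ε (frontier S)) ≤
      ENNReal.ofReal (2 * ε * (d * ((1 + 2 * ε) ^ (d - 1) + 1))) := by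
  set T : Set (Fin d → ℝ) := WithLp.toLp 2 ⁻¹' S
  have hT : Convex ℝ T := hS.linear_preimage (PiLp.continuousLinearEquiv 2 ℝ _).symm.toLinearMap
  have hTK : T ⊆ univ.pi fun _ => Icc 0 1 := fun x hx j _ => hSsub hx j
  have hfr : frontier T = WithLp.toLp 2 ⁻¹' frontier S :=
    ((PiLp.continuousLinearEquiv 2 ℝ _).symm.toHomeomorph.preimage_frontier S).symm
  set g : ℝ → ℝ := fun δ => 2 * δ * (d * ((1 + 2 * δ) ^ (d - 1) + 1))
  have hbound : ∀ δ, 0 ≤ δ → volume (Metric.thickening δ (frontier S)) ≤ ENNReal.ofReal (g δ) := by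
    intro δ hδ
    calc volume (Metric.thickening δ (frontier S)) ≤ volume (Metric.thickening δ (frontier T)) :=
          hfr ▸ volume_thickening_le_volume_thickening_preimage_toLp _ δ
      _ ≤ _ := hT.volume_thickening_frontier_le hTK hδ
      _ = ENNReal.ofReal (g δ) := by
        rw [Fintype.card_fin, sub_zero, ENNReal.ofReal_one, one_pow, mul_one,
          ← ENNReal.ofReal_pow (by positivity), ← ENNReal.ofReal_mul (by positivity),
          ← ENNReal.ofReal_nsmul, ← ENNReal.ofReal_nsmul,
          ← ENNReal.ofReal_add (by positivity) (by positivity)]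
        congr 1
        simp only [g, nsmul_eq_mul]
        ring
  have hg : Tendsto (fun δ => ENNReal.ofReal (g δ)) (𝓝[>] ε) (𝓝 (ENNReal.ofReal (g ε))) :=
    ((ENNReal.continuous_ofReal.comp (by fun_prop : Continuous g)).tendsto ε).mono_left
      nhdsWithin_le_nhds
  -- The inner-shell argument needs points strictly closer than `δ` to `∂S`, hence `δ > ε`.
  refine ge_of_tendsto hg (eventually_nhdsWithin_of_forall fun δ hδ => ?_)
  exact (measure_mono (cthickening_subset_thickening' (hε.trans_lt hδ) hδ _)).trans
    (hbound δ (hε.trans (le_of_lt hδ)))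

/-- The upper Minkowski content of the boundary of a convex subset of the unit cube is
at most `2d`, the surface area of the cube. -/
theorem upper_minkowski_content_boundary_convex_le {d : ℕ}
    (S : Set (EuclideanSpace ℝ (Fin d))) (hSsub : S ⊆ unitCube d) (hSconv : Convex ℝ S) :
    Filter.limsup
        (fun ε : ℝ => (volume (Metric.cthickening ε (frontier S))).toReal / (2 * ε))
        (𝓝[>] (0:ℝ)) ≤ 2 * d := by
  set g : ℝ → ℝ := fun ε => d * ((1 + 2 * ε) ^ (d - 1) + 1)
  have hbound : ∀ ε ∈ Ioi (0 : ℝ),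
      (volume (cthickening ε (frontier S))).toReal / (2 * ε) ≤ g ε := fun ε (hε : 0 < ε) => by
    rw [div_le_iff₀ (by positivity), mul_comm]
    exact ENNReal.toReal_le_of_le_ofReal (by positivity)
      (hSconv.volume_cthickening_frontier_le hSsub hε.le)
  have hg : Tendsto g (𝓝[>] 0) (𝓝 (2 * d)) := by
    have hg0 : g 0 = 2 * d := by simp only [g]; ring
    exact hg0 ▸ ((by fun_prop : Continuous g).tendsto 0).mono_left nhdsWithin_le_nhds
  calc limsup _ (𝓝[>] 0) ≤ limsup g (𝓝[>] 0) :=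
        limsup_le_limsup (eventually_nhdsWithin_of_forall hbound)
          (isCoboundedUnder_le_of_eventually_le _ (eventually_nhdsWithin_of_forall
            fun ε (hε : 0 < ε) => div_nonneg ENNReal.toReal_nonneg (by positivity)))
          hg.isBoundedUnder_le
    _ = 2 * d := hg.limsup_eq
end

section
/- Let Ω_1,…,Ω_N be an equivolume partition of [0,1]^d, let X_1,…,X_N be a stratified sample associated with it, and let R ⊆ [0,1]^d be measurable. Let V be any real number with V ≥ #{i : 0 < λ(Ω_i ∩ R) < 1/N}. Then for every t ≥ 0, P( |∑_{n=1}^N 1_R(X_n) − N·λ(R)| ≥ t ) ≤ 2·exp( − t² / (2V + (2/3)t) ). -/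
/-!
Bernstein's inequality. Comparing `(n + 2)! ≥ 2 · 3ⁿ` termwise in the exponential series gives
`exp (s y) ≤ 1 + s y + y² s² / (2 (1 - s / 3))` for `0 ≤ s < 3` and `y ≤ 1`. Hence independent
centred variables `Yᵢ` with `|Yᵢ| ≤ 1` and `∑ E[Yᵢ²] ≤ V` satisfy
`E[exp (s ∑ Yᵢ)] ≤ exp (V s² / (2 (1 - s / 3)))`, and Chernoff's bound at `s = t / (V + t / 3)`
gives `P(∑ Yᵢ ≥ t) ≤ exp (-t² / (2 V + 2 t / 3))`.

For a stratified sample take `Yᵢ = 1_R(Xᵢ) - pᵢ` with `pᵢ = P(Xᵢ ∈ R) = N λ(Ωᵢ ∩ R)`: the `pᵢ` add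
up to `N λ(R)`, and `E[Yᵢ²] = pᵢ (1 - pᵢ)` vanishes unless `0 < λ(Ωᵢ ∩ R) < 1/N`.
-/

open MeasureTheory ProbabilityTheory Real Set
open scoped ENNReal

def IsStratifiedSample {d N : ℕ} {Ω : Type*} [MeasureSpace Ω]
    (Os : Fin N → Set (Fin d → ℝ)) (X : Fin N → Ω → (Fin d → ℝ)) : Prop :=
  (∀ i, Measurable (X i)) ∧
  iIndepFun X ℙ ∧
  ∀ i, ∀ A : Set (Fin d → ℝ), MeasurableSet A →
    ℙ (X i ⁻¹' A) = N * volume (A ∩ Os i)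

open scoped Nat

theorem Real.exp_le_one_add_add_sq_div_of_nonneg {x : ℝ} (h0 : 0 ≤ x) (h3 : x < 3) :
    exp x ≤ 1 + x + x ^ 2 / (2 * (1 - x / 3)) := by
  have hexp : HasSum (fun n : ℕ => x ^ (n + 2) / (n + 2)!) (exp x - 1 - x) := by
    have := (hasSum_nat_add_iff' 2).2 (exp_eq_exp_ℝ ▸ NormedSpace.expSeries_div_hasSum_exp x)
    simpa [Finset.sum_range_succ, sub_sub] using this
  have hgeom := (hasSum_geometric_of_lt_one (r := x / 3) (by positivity) (by linarith)).mul_left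
    (x ^ 2 / 2)
  have hterm (n : ℕ) : x ^ (n + 2) / (n + 2)! ≤ x ^ 2 / 2 * (x / 3) ^ n := by
    have hfac : (2 * 3 ^ n : ℝ) ≤ (n + 2)! := by
      exact_mod_cast (Nat.factorial_mul_pow_le_factorial (m := 2) (n := n)).trans_eq
        (by rw [add_comm])
    calc x ^ (n + 2) / (n + 2)! ≤ x ^ (n + 2) / (2 * 3 ^ n) := by gcongr
      _ = x ^ 2 / 2 * (x / 3) ^ n := by rw [div_pow]; ring
  calc exp x = 1 + x + (exp x - 1 - x) := by ring
    _ ≤ 1 + x + x ^ 2 / 2 * (1 - x / 3)⁻¹ := by gcongr; exact hasSum_le hterm hexp hgeom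
    _ = 1 + x + x ^ 2 / (2 * (1 - x / 3)) := by rw [← div_eq_mul_inv, div_div]

theorem Real.exp_le_one_add_add_sq_div_two_of_nonpos {x : ℝ} (hx : x ≤ 0) :
    exp x ≤ 1 + x + x ^ 2 / 2 := by
  have h := quadratic_le_exp_of_nonneg (neg_nonneg.2 hx)
  have hmul : exp x * exp (-x) = 1 := by rw [← exp_add, add_neg_cancel, exp_zero]
  nlinarith [exp_pos x, sq_nonneg x]

theorem Real.exp_mul_le_one_add_add_sq_mul {s y : ℝ} (hs0 : 0 ≤ s) (hs3 : s < 3) (hy : y ≤ 1) :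
    exp (s * y) ≤ 1 + s * y + y ^ 2 * (s ^ 2 / (2 * (1 - s / 3))) := by
  rcases le_or_gt y 0 with hy0 | hy0
  · calc exp (s * y) ≤ 1 + s * y + (s * y) ^ 2 / 2 :=
          exp_le_one_add_add_sq_div_two_of_nonpos (mul_nonpos_of_nonneg_of_nonpos hs0 hy0)
      _ ≤ 1 + s * y + y ^ 2 * (s ^ 2 / (2 * (1 - s / 3))) := by
          rw [mul_pow, mul_comm (s ^ 2), mul_div_assoc]
          gcongr <;> linarith
  · have hsy : s * y ≤ s := mul_le_of_le_one_right hs0 hy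
    calc exp (s * y) ≤ 1 + s * y + (s * y) ^ 2 / (2 * (1 - s * y / 3)) :=
          exp_le_one_add_add_sq_div_of_nonneg (by positivity) (by linarith)
      _ ≤ 1 + s * y + y ^ 2 * (s ^ 2 / (2 * (1 - s / 3))) := by
          rw [mul_pow, mul_comm (s ^ 2), mul_div_assoc]
          gcongr; linarith

theorem exists_bernstein_exponent_le {V t : ℝ} (hV : 0 ≤ V) (ht : 0 ≤ t) :
    ∃ s, 0 ≤ s ∧ s < 3 ∧
      -(s * t) + V * (s ^ 2 / (2 * (1 - s / 3))) ≤ -t ^ 2 / (2 * V + 2 / 3 * t) := by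
  rcases hV.eq_or_lt with rfl | hVpos
  -- The optimal `s = t / (V + t / 3)` would be `3` here, but `s = 3 / 2` already attains the bound.
  · refine ⟨3 / 2, by norm_num, by norm_num, le_of_eq ?_⟩
    rcases ht.eq_or_lt with rfl | htpos
    · simp
    · field_simp
      ring
  · have hD : 0 < V + t / 3 := by positivity
    refine ⟨t / (V + t / 3), by positivity, ?_, le_of_eq ?_⟩
    · rw [div_lt_iff₀ hD]; linarith
    · have h1 : 1 - t / (V + t / 3) / 3 = V / (V + t / 3) := by field_simp; ring
      rw [h1]
      field_simp
      ring

section Bernstein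

variable {Ω : Type*} [MeasurableSpace Ω] {μ : Measure Ω} [IsProbabilityMeasure μ]

theorem integrable_exp_mul_of_abs_le_one {Y : Ω → ℝ} (hY : Measurable Y) (hb : ∀ ω, |Y ω| ≤ 1)
    {s : ℝ} (hs : 0 ≤ s) : Integrable (fun ω => exp (s * Y ω)) μ := by
  refine Integrable.of_bound (by fun_prop) (exp s) (ae_of_all _ fun ω => ?_)
  rw [norm_of_nonneg (exp_pos _).le, exp_le_exp]
  exact mul_le_of_le_one_right hs (abs_le.1 (hb ω)).2

theorem mgf_le_exp_of_abs_le_one {Y : Ω → ℝ} (hY : Measurable Y) (hb : ∀ ω, |Y ω| ≤ 1)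
    (hmean : μ[Y] = 0) {s : ℝ} (hs0 : 0 ≤ s) (hs3 : s < 3) :
    mgf Y μ s ≤ exp ((∫ ω, Y ω ^ 2 ∂μ) * (s ^ 2 / (2 * (1 - s / 3)))) := by
  set c := s ^ 2 / (2 * (1 - s / 3))
  have hYint : Integrable Y μ := .of_bound hY.aestronglyMeasurable 1 (ae_of_all _ hb)
  have hY2int : Integrable (fun ω => Y ω ^ 2) μ :=
    Integrable.of_bound (by fun_prop) 1 (ae_of_all _ fun ω => by
      rw [norm_pow, Real.norm_eq_abs]; exact pow_le_one₀ (abs_nonneg _) (hb ω))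
  have hlin : Integrable (fun ω => 1 + s * Y ω) μ := (integrable_const 1).add (hYint.const_mul s)
  calc mgf Y μ s ≤ ∫ ω, (1 + s * Y ω + Y ω ^ 2 * c) ∂μ :=
        integral_mono (integrable_exp_mul_of_abs_le_one hY hb hs0) (hlin.add (hY2int.mul_const c))
          fun ω => exp_mul_le_one_add_add_sq_mul hs0 hs3 (abs_le.1 (hb ω)).2
    _ = 1 + (∫ ω, Y ω ^ 2 ∂μ) * c := by
        rw [integral_add hlin (hY2int.mul_const c), integral_add (integrable_const 1)
          (hYint.const_mul s), integral_const_mul, integral_mul_const, hmean]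
        simp
    _ ≤ exp ((∫ ω, Y ω ^ 2 ∂μ) * c) := by linarith [add_one_le_exp ((∫ ω, Y ω ^ 2 ∂μ) * c)]

theorem measureReal_sum_ge_le_bernstein {ι : Type*} [Fintype ι] {Y : ι → Ω → ℝ}
    (hmeas : ∀ i, Measurable (Y i)) (hind : iIndepFun Y μ) (hb : ∀ i ω, |Y i ω| ≤ 1)
    (hmean : ∀ i, μ[Y i] = 0) {V t : ℝ} (hV : ∑ i, ∫ ω, Y i ω ^ 2 ∂μ ≤ V) (ht : 0 ≤ t) :
    μ.real {ω | t ≤ ∑ i, Y i ω} ≤ exp (-t ^ 2 / (2 * V + 2 / 3 * t)) := by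
  have hV0 : 0 ≤ V := (Finset.sum_nonneg fun i _ => integral_nonneg fun ω => sq_nonneg _).trans hV
  obtain ⟨s, hs0, hs3, hexponent⟩ := exists_bernstein_exponent_le hV0 ht
  set c := s ^ 2 / (2 * (1 - s / 3))
  have hc : 0 ≤ c := div_nonneg (sq_nonneg s) (by linarith)
  have hint : Integrable (fun ω => exp (s * (∑ i, Y i) ω)) μ :=
    hind.integrable_exp_mul_sum hmeas fun i _ =>
      integrable_exp_mul_of_abs_le_one (hmeas i) (hb i) hs0
  calc μ.real {ω | t ≤ ∑ i, Y i ω} ≤ exp (-s * t) * mgf (∑ i, Y i) μ s := by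
        simpa only [Finset.sum_apply] using measure_ge_le_exp_mul_mgf t hs0 hint
    _ = exp (-s * t) * ∏ i, mgf (Y i) μ s := by rw [hind.mgf_sum hmeas]
    _ ≤ exp (-s * t) * ∏ i, exp ((∫ ω, Y i ω ^ 2 ∂μ) * c) := by
        gcongr with i
        · exact fun i _ => mgf_nonneg
        · exact mgf_le_exp_of_abs_le_one (hmeas i) (hb i) (hmean i) hs0 hs3
    _ = exp (-(s * t) + (∑ i, ∫ ω, Y i ω ^ 2 ∂μ) * c) := by
        rw [← exp_sum, ← exp_add, Finset.sum_mul, neg_mul]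
    _ ≤ exp (-(s * t) + V * c) := by gcongr
    _ ≤ exp (-t ^ 2 / (2 * V + 2 / 3 * t)) := exp_le_exp.2 hexponent

theorem measureReal_abs_sum_ge_le_bernstein {ι : Type*} [Fintype ι] {Y : ι → Ω → ℝ}
    (hmeas : ∀ i, Measurable (Y i)) (hind : iIndepFun Y μ) (hb : ∀ i ω, |Y i ω| ≤ 1)
    (hmean : ∀ i, μ[Y i] = 0) {V t : ℝ} (hV : ∑ i, ∫ ω, Y i ω ^ 2 ∂μ ≤ V) (ht : 0 ≤ t) :
    μ.real {ω | t ≤ |∑ i, Y i ω|} ≤ 2 * exp (-t ^ 2 / (2 * V + 2 / 3 * t)) := by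
  have hupper := measureReal_sum_ge_le_bernstein hmeas hind hb hmean hV ht
  have hlower := measureReal_sum_ge_le_bernstein (Y := fun i ω => -Y i ω)
    (fun i => (hmeas i).neg) (hind.comp (fun _ x => -x) fun _ => measurable_neg)
    (fun i ω => (abs_neg (Y i ω)).trans_le (hb i ω))
    (fun i => by rw [integral_neg, hmean i, neg_zero])
    (by simpa only [neg_sq] using hV) ht
  have hsub : {ω | t ≤ |∑ i, Y i ω|} ⊆ {ω | t ≤ ∑ i, Y i ω} ∪ {ω | t ≤ ∑ i, -Y i ω} := by
    intro ω (hω : t ≤ |∑ i, Y i ω|)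
    rcases le_abs.1 hω with h | h
    · exact Or.inl h
    · exact Or.inr (show t ≤ ∑ i, -Y i ω by rwa [Finset.sum_neg_distrib])
  calc μ.real {ω | t ≤ |∑ i, Y i ω|}
      ≤ μ.real {ω | t ≤ ∑ i, Y i ω} + μ.real {ω | t ≤ ∑ i, -Y i ω} :=
        (measureReal_mono hsub).trans (measureReal_union_le _ _)
    _ ≤ 2 * exp (-t ^ 2 / (2 * V + 2 / 3 * t)) := by linarith

end Bernstein

section Bernoulli

variable {Ω : Type*} [MeasurableSpace Ω] {μ : Measure Ω} [IsProbabilityMeasure μ] {A : Set Ω}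

theorem abs_indicator_one_sub_measureReal_le_one (ω : Ω) : |A.indicator 1 ω - μ.real A| ≤ 1 := by
  have h0 : 0 ≤ μ.real A := measureReal_nonneg
  have h1 : μ.real A ≤ 1 := measureReal_le_one
  rw [abs_le]
  by_cases h : ω ∈ A <;> simp only [h, indicator_of_mem, indicator_of_notMem, not_false_eq_true,
    Pi.one_apply] <;> constructor <;> linarith

theorem integral_indicator_one_sub_measureReal (hA : MeasurableSet A) :
    ∫ ω, (A.indicator 1 ω - μ.real A) ∂μ = 0 := by
  rw [integral_sub ((integrable_const 1).indicator hA) (integrable_const _),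
    integral_indicator_one hA]
  simp

theorem integral_indicator_one_sub_measureReal_sq (hA : MeasurableSet A) :
    ∫ ω, (A.indicator 1 ω - μ.real A) ^ 2 ∂μ = μ.real A * (1 - μ.real A) := by
  have hsq (ω : Ω) : (A.indicator 1 ω - μ.real A) ^ 2
      = (1 - 2 * μ.real A) * A.indicator 1 ω + μ.real A ^ 2 := by
    by_cases h : ω ∈ A <;> simp [h]; ring
  simp_rw [hsq]
  rw [integral_add (((integrable_const 1).indicator hA).const_mul _) (integrable_const _),
    integral_const_mul, integral_indicator_one hA]
  simp
  ring

end Bernoulli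

namespace IsStratifiedSample

variable {d N : ℕ} {Os : Fin N → Set (Fin d → ℝ)} {Ω : Type*} [MeasureSpace Ω]
  {X : Fin N → Ω → (Fin d → ℝ)} {R : Set (Fin d → ℝ)}

theorem sum_measureReal_preimage [IsFiniteMeasure (ℙ : Measure Ω)]
    (hX : IsStratifiedSample Os X) (hpart : IsEquivolumePartition Os) (hRsub : R ⊆ Icc 0 1)
    (hRm : MeasurableSet R) :
    ∑ i, (ℙ).real (X i ⁻¹' R) = N * volume.real R := by
  obtain ⟨hOm, hOdisj, hOunion, -⟩ := hpart
  have hdisj : Pairwise fun i j => Disjoint (R ∩ Os i) (R ∩ Os j) := fun i j hij =>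
    (hOdisj hij).mono inter_subset_right inter_subset_right
  have hsum : ∑ i, ℙ (X i ⁻¹' R) = N * volume R := by
    calc ∑ i, ℙ (X i ⁻¹' R) = N * ∑ i, volume (R ∩ Os i) := by
          rw [Finset.mul_sum]; exact Finset.sum_congr rfl fun i _ => hX.2.2 i R hRm
      _ = N * volume (⋃ i, R ∩ Os i) := by
          rw [measure_iUnion hdisj fun i => hRm.inter (hOm i), tsum_fintype]
      _ = N * volume R := by rw [← inter_iUnion, hOunion, inter_eq_self_of_subset_left hRsub]
  simp only [measureReal_def]
  rw [← ENNReal.toReal_sum (fun i _ => measure_ne_top _ _), hsum, ENNReal.toReal_mul,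
    ENNReal.toReal_natCast]

theorem measureReal_preimage_eq_zero_or_one (hX : IsStratifiedSample Os X)
    (hpart : IsEquivolumePartition Os) (hRm : MeasurableSet R) (i : Fin N)
    (hi : ¬(0 < volume (Os i ∩ R) ∧ volume (Os i ∩ R) < (N : ℝ≥0∞)⁻¹)) :
    (ℙ).real (X i ⁻¹' R) = 0 ∨ (ℙ).real (X i ⁻¹' R) = 1 := by
  have hN : (N : ℝ≥0∞) ≠ 0 := Nat.cast_ne_zero.2 (Fin.pos i).ne'
  have hle : volume (Os i ∩ R) ≤ (N : ℝ≥0∞)⁻¹ := hpart.2.2.2 i ▸ measure_mono inter_subset_left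
  rw [measureReal_def, hX.2.2 i R hRm, inter_comm]
  rcases eq_zero_or_pos (volume (Os i ∩ R)) with h0 | hpos
  · left; simp [h0]
  · right
    rw [(not_lt.1 (fun hlt => hi ⟨hpos, hlt⟩)).antisymm' hle,
      ENNReal.mul_inv_cancel hN (ENNReal.natCast_ne_top N), ENNReal.toReal_one]

theorem sum_variance_le_card [IsProbabilityMeasure (ℙ : Measure Ω)]
    (hX : IsStratifiedSample Os X) (hpart : IsEquivolumePartition Os) (hRm : MeasurableSet R) :
    ∑ i, (ℙ).real (X i ⁻¹' R) * (1 - (ℙ).real (X i ⁻¹' R)) ≤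
      Nat.card {i : Fin N // 0 < volume (Os i ∩ R) ∧ volume (Os i ∩ R) < (N : ℝ≥0∞)⁻¹} := by
  classical
  rw [Nat.card_eq_fintype_card, Fintype.card_subtype, Finset.natCast_card_filter]
  refine Finset.sum_le_sum fun i _ => ?_
  split_ifs with hi
  · have h0 : 0 ≤ (ℙ).real (X i ⁻¹' R) := measureReal_nonneg
    have h1 : (ℙ).real (X i ⁻¹' R) ≤ 1 := measureReal_le_one
    nlinarith
  · rcases hX.measureReal_preimage_eq_zero_or_one hpart hRm i hi with h | h <;> simp [h]

end IsStratifiedSample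

theorem bernstein_tail_bound_stratified {d N : ℕ}
    (Os : Fin N → Set (Fin d → ℝ)) (hpart : IsEquivolumePartition Os)
    {Ω : Type*} [MeasureSpace Ω] [IsProbabilityMeasure (ℙ : Measure Ω)]
    (X : Fin N → Ω → (Fin d → ℝ)) (hX : IsStratifiedSample Os X)
    (R : Set (Fin d → ℝ)) (hRsub : R ⊆ Set.Icc 0 1) (hRm : MeasurableSet R)
    (V : ℝ)
    (hV : (Nat.card {i : Fin N // 0 < volume (Os i ∩ R) ∧
        volume (Os i ∩ R) < (N : ℝ≥0∞)⁻¹} : ℝ) ≤ V)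
    (t : ℝ) (ht : 0 ≤ t) :
    ℙ {ω | t ≤ |(∑ n, R.indicator (fun _ => (1:ℝ)) (X n ω)) - (N : ℝ) * (volume R).toReal|}
      ≤ ENNReal.ofReal (2 * Real.exp (-(t ^ 2) / (2 * V + (2/3) * t))) := by
  have hA (i : Fin N) : MeasurableSet (X i ⁻¹' R) := hX.1 i hRm
  set Y : Fin N → Ω → ℝ := fun i ω => (X i ⁻¹' R).indicator 1 ω - (ℙ).real (X i ⁻¹' R)
  have hcentered (ω : Ω) :
      (∑ n, R.indicator (fun _ => (1:ℝ)) (X n ω)) - (N : ℝ) * (volume R).toReal = ∑ i, Y i ω := by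
    rw [← measureReal_def, ← hX.sum_measureReal_preimage hpart hRsub hRm, ← Finset.sum_sub_distrib]
    rfl
  have hvar : ∑ i, ∫ ω, Y i ω ^ 2 ∂ℙ ≤ V := by
    simp only [Y, integral_indicator_one_sub_measureReal_sq (hA _)]
    exact (hX.sum_variance_le_card hpart hRm).trans hV
  have hmeas (i : Fin N) : Measurable (Y i) :=
    (measurable_const.indicator (hA i)).sub measurable_const
  have hind : iIndepFun Y ℙ :=
    hX.2.1.comp (fun i x => R.indicator 1 x - (ℙ).real (X i ⁻¹' R))
      fun i => (measurable_const.indicator hRm).sub measurable_const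
  rw [← ofReal_measureReal]
  simp_rw [hcentered]
  exact ENNReal.ofReal_le_ofReal <| measureReal_abs_sum_ge_le_bernstein hmeas hind
    (fun i => abs_indicator_one_sub_measureReal_le_one)
    (fun i => integral_indicator_one_sub_measureReal (hA i)) hvar ht
end
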